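/- arXiv:2605.04699 — 11 statements merged into one kernel-verified Lean document; each statement's English description precedes it below -/
import Mathlib

section
/- For every real number κ with 5/6 < κ ≤ 1 there exists a doubly stochastic 2×2 matrix M_κ — namely M_κ = [[1−ε, ε],[ε, 1−ε]] with ε = κ − 5/6 — such that (M_κ, κ) is a no-instance of DEMAND-AWARE THROUGHPUT; that is, no 2×2 matrix B of nonnegative integers with all row and column sums equal to 3 can host κ·M_κ. -/
open Finset

/-- An `n × n` real matrix is doubly stochastic if all entries are nonnegative and
every row and every column sums to `1`. -/
def DoublyStochastic {n : ℕ} (M : Matrix (Fin n) (Fin n) ℝ) : Prop :=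
  (∀ i j, 0 ≤ M i j) ∧ (∀ i, ∑ j, M i j = 1) ∧ (∀ j, ∑ i, M i j = 1)

/-- Adjacency matrix of a directed `(2n−1)`-regular multigraph on `n` vertices:
a matrix of natural numbers whose every row and every column sums to `2n − 1`. -/
def IsAdjMatrix {n : ℕ} (B : Matrix (Fin n) (Fin n) ℕ) : Prop :=
  (∀ i, ∑ j, B i j = 2 * n - 1) ∧ (∀ j, ∑ i, B i j = 2 * n - 1)

/-- Number of traversals of the arc `(u,v)` by the walk `P`
(a walk is a list of vertices of length at least 2). -/
def arcCount {n : ℕ} (P : List (Fin n)) (u v : Fin n) : ℕ :=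
  (P.zip P.tail).count (u, v)

/-- The multigraph with adjacency matrix `B` can host the nonnegative demand matrix `C`:
there is a finitely supported assignment of nonnegative reals to walks such that
for every pair `(u,v)` the total value on walks from `u` to `v` equals `(2n−1)·C u v`,
and the total usage of each arc `(u,v)` is at most its capacity `B u v`. -/
def CanHost {n : ℕ} (B : Matrix (Fin n) (Fin n) ℕ) (C : Matrix (Fin n) (Fin n) ℝ) : Prop :=
  ∃ (S : Finset (List (Fin n))) (f : List (Fin n) → ℝ),
    (∀ P ∈ S, 2 ≤ P.length) ∧
    (∀ P ∈ S, 0 ≤ f P) ∧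
    (∀ u v : Fin n,
      (∑ P ∈ S, if P.head? = some u ∧ P.getLast? = some v then f P else 0)
        = (2 * (n : ℝ) - 1) * C u v) ∧
    (∀ u v : Fin n, (∑ P ∈ S, f P * (arcCount P u v : ℝ)) ≤ (B u v : ℝ))

/-- `(M, κ)` is a yes-instance of DEMAND-AWARE THROUGHPUT. -/
def DATYes {n : ℕ} (M : Matrix (Fin n) (Fin n) ℝ) (κ : ℝ) : Prop :=
  ∃ B : Matrix (Fin n) (Fin n) ℕ, IsAdjMatrix B ∧ CanHost B (κ • M)

/-- `(M, κ)` is a yes-instance of DEMAND-AWARE DIRECT THROUGHPUT. -/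
def DADTYes {n : ℕ} (M : Matrix (Fin n) (Fin n) ℝ) (κ : ℝ) : Prop :=
  ∃ B : Matrix (Fin n) (Fin n) ℕ, IsAdjMatrix B ∧
    ∀ u v, (2 * (n : ℝ) - 1) * κ * M u v ≤ (B u v : ℝ)

/-- `(M, κ)` is a yes-instance of DEMAND-AWARE WEAK THROUGHPUT. -/
def DAWTYes {n : ℕ} (M : Matrix (Fin n) (Fin n) ℝ) (κ : ℝ) : Prop :=
  ∃ (B : Matrix (Fin n) (Fin n) ℕ) (C : Matrix (Fin n) (Fin n) ℝ),
    IsAdjMatrix B ∧ (∀ u v, 0 ≤ C u v ∧ C u v ≤ M u v) ∧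
    (κ * n ≤ ∑ u, ∑ v, C u v) ∧ CanHost B C

/-- `(M, κ)` is a yes-instance of DEMAND-AWARE WEAK DIRECT THROUGHPUT. -/
def DAWDTYes {n : ℕ} (M : Matrix (Fin n) (Fin n) ℝ) (κ : ℝ) : Prop :=
  ∃ (B : Matrix (Fin n) (Fin n) ℕ) (C : Matrix (Fin n) (Fin n) ℝ),
    IsAdjMatrix B ∧ (∀ u v, 0 ≤ C u v ∧ C u v ≤ M u v) ∧
    (κ * n ≤ ∑ u, ∑ v, C u v) ∧
    (∀ u v, (2 * (n : ℝ) - 1) * C u v ≤ (B u v : ℝ))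


lemma fin2_eq_of_ne {y u w : Fin 2} (h1 : w ≠ u) (h2 : y ≠ w) : y = u := by omega

lemma mem_of_getLast?' {l : List (Fin 2)} {u : Fin 2} (h : l.getLast? = some u) : u ∈ l := by
  obtain ⟨hne, rfl⟩ := List.mem_getLast?_eq_getLast (by rw [h]; rfl)
  exact List.getLast_mem hne

lemma zip_mem_of_head {P : List (Fin 2)} {u w : Fin 2} (hne : w ≠ u)
    (hh : P.head? = some u) (hw : w ∈ P) : (u, w) ∈ P.zip P.tail := by
  induction P with
  | nil => simp at hh
  | cons x t ih =>
    simp only [List.head?_cons, Option.some.injEq] at hh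
    subst hh
    rcases t with _ | ⟨y, t'⟩
    · simp at hw
      omega
    · have hzip : (x :: y :: t').zip (x :: y :: t').tail
          = (x, y) :: ((y :: t').zip (y :: t').tail) := rfl
      by_cases hyw : y = w
      · rw [hzip, hyw]; exact List.mem_cons_self
      · have hyx : y = x := fin2_eq_of_ne hne hyw
        have hwt : w ∈ y :: t' := by
          rcases List.mem_cons.1 hw with h | h
          · omega
          · exact h
        have := ih (by rw [hyx]; rfl) hwt
        rw [hzip]
        exact List.mem_cons_of_mem _ this

lemma zip_mem_of_last {P : List (Fin 2)} {u w : Fin 2} (hne : w ≠ u)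
    (hl : P.getLast? = some u) (hw : w ∈ P) : (w, u) ∈ P.zip P.tail := by
  induction P with
  | nil => simp at hl
  | cons x t ih =>
    rcases t with _ | ⟨y, t'⟩
    · simp at hl hw
      omega
    · have hzip : (x :: y :: t').zip (x :: y :: t').tail
          = (x, y) :: ((y :: t').zip (y :: t').tail) := rfl
      rw [List.getLast?_cons_cons] at hl
      by_cases hwt : w ∈ y :: t'
      · rw [hzip]; exact List.mem_cons_of_mem _ (ih hl hwt)
      · have hwx : w = x := by
          rcases List.mem_cons.1 hw with h | h
          · exact h
          · exact absurd h hwt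
        have hyw : y ≠ w := fun h => hwt (by rw [h]; exact List.mem_cons_self)
        have hyu : y = u := fin2_eq_of_ne hne hyw
        rw [hzip, hwx, hyu]
        exact List.mem_cons_self

lemma loop_or_cross {P : List (Fin 2)} {u w : Fin 2} (hne : w ≠ u) (hlen : 2 ≤ P.length)
    (hh : P.head? = some u) (hl : P.getLast? = some u) :
    (u, u) ∈ P.zip P.tail ∨ ((u, w) ∈ P.zip P.tail ∧ (w, u) ∈ P.zip P.tail) := by
  by_cases hw : w ∈ P
  · exact Or.inr ⟨zip_mem_of_head hne hh hw, zip_mem_of_last hne hl hw⟩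
  · left
    rcases P with _ | ⟨x, _ | ⟨y, t'⟩⟩
    · simp at hh
    · simp at hlen
    · have hx : x = u := by simpa using hh
      have hy : y = u := by
        by_contra hy
        have : y = w := by omega
        exact hw (by rw [← this]; exact List.mem_cons_of_mem _ (List.mem_cons_self))
      have hzip : (x :: y :: t').zip (x :: y :: t').tail
          = (x, y) :: ((y :: t').zip (y :: t').tail) := rfl
      rw [hzip, hy, hx]
      exact List.mem_cons_self

lemma one_le_arcCount {P : List (Fin 2)} {u v : Fin 2} (h : (u, v) ∈ P.zip P.tail) :
    1 ≤ arcCount P u v := List.count_pos_iff.mpr h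

/-- For every real `5/6 < κ ≤ 1`, the doubly stochastic matrix
`[[1−ε, ε],[ε, 1−ε]]` with `ε = κ − 5/6` yields a no-instance of DEMAND-AWARE THROUGHPUT. -/
theorem demand_aware_throughput_upper_bound (κ : ℝ) (h1 : 5 / 6 < κ) (h2 : κ ≤ 1) :
    let ε : ℝ := κ - 5 / 6
    let M : Matrix (Fin 2) (Fin 2) ℝ := !![1 - ε, ε; ε, 1 - ε]
    DoublyStochastic M ∧ ¬ DATYes M κ := by
  intro ε M
  have hεdef : ε = κ - 5 / 6 := rfl
  have hMdef : M = !![1 - ε, ε; ε, 1 - ε] := rfl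
  clear_value ε M
  subst hMdef
  have hε0 : 0 < ε := by rw [hεdef]; linarith
  have hε1 : ε ≤ 1 / 6 := by rw [hεdef]; linarith
  constructor
  · refine ⟨?_, ?_, ?_⟩
    · intro i j
      fin_cases i <;> fin_cases j <;> norm_num <;> linarith
    · intro i
      fin_cases i <;> simp [Fin.sum_univ_two]
    · intro j
      fin_cases j <;> simp [Fin.sum_univ_two]
  · rintro ⟨B, ⟨hrow, hcol⟩, S, f, hlen, hf0, hflow, hcap⟩
    -- matrix structure
    have e0 : B 0 0 + B 0 1 = 3 := by simpa [Fin.sum_univ_two] using hrow 0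
    have e1 : B 1 0 + B 1 1 = 3 := by simpa [Fin.sum_univ_two] using hrow 1
    have e2 : B 0 0 + B 1 0 = 3 := by simpa [Fin.sum_univ_two] using hcol 0
    -- flow values
    have hM00 : (κ • !![1 - ε, ε; ε, 1 - ε] : Matrix (Fin 2) (Fin 2) ℝ) 0 0 = κ * (1 - ε) := by simp
    have hM11 : (κ • !![1 - ε, ε; ε, 1 - ε] : Matrix (Fin 2) (Fin 2) ℝ) 1 1 = κ * (1 - ε) := by simp
    have hM01 : (κ • !![1 - ε, ε; ε, 1 - ε] : Matrix (Fin 2) (Fin 2) ℝ) 0 1 = κ * ε := by simp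
    have h00 : (∑ P ∈ S, if P.head? = some (0:Fin 2) ∧ P.getLast? = some (0:Fin 2)
        then f P else 0) = 3 * (κ * (1 - ε)) := by
      rw [hflow 0 0, hM00]; norm_num
    have h11 : (∑ P ∈ S, if P.head? = some (1:Fin 2) ∧ P.getLast? = some (1:Fin 2)
        then f P else 0) = 3 * (κ * (1 - ε)) := by
      rw [hflow 1 1, hM11]; norm_num
    have h01 : (∑ P ∈ S, if P.head? = some (0:Fin 2) ∧ P.getLast? = some (1:Fin 2)
        then f P else 0) = 3 * (κ * ε) := by
      rw [hflow 0 1, hM01]; norm_num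
    -- loop bound at vertex u
    have loopbd : ∀ u : Fin 2,
        (∑ P ∈ S, if P.head? = some u ∧ P.getLast? = some u ∧ arcCount P u u ≠ 0
          then f P else 0) ≤ (B u u : ℝ) := by
      intro u
      refine le_trans (Finset.sum_le_sum fun P hP => ?_) (hcap u u)
      by_cases h : P.head? = some u ∧ P.getLast? = some u ∧ arcCount P u u ≠ 0
      · rw [if_pos h]
        have hc : (1:ℝ) ≤ (arcCount P u u : ℝ) := by
          exact_mod_cast Nat.one_le_iff_ne_zero.mpr h.2.2
        exact le_mul_of_one_le_right (hf0 P hP) hc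
      · rw [if_neg h]
        exact mul_nonneg (hf0 P hP) (Nat.cast_nonneg _)
    -- cross bound
    have crossbd :
        (∑ P ∈ S, if P.head? = some (0:Fin 2) ∧ P.getLast? = some (0:Fin 2)
          ∧ arcCount P 0 0 = 0 then f P else 0)
        + (∑ P ∈ S, if P.head? = some (1:Fin 2) ∧ P.getLast? = some (1:Fin 2)
          ∧ arcCount P 1 1 = 0 then f P else 0)
        + (∑ P ∈ S, if P.head? = some (0:Fin 2) ∧ P.getLast? = some (1:Fin 2)
          then f P else 0)
        ≤ (B 0 1 : ℝ) := by
      rw [← Finset.sum_add_distrib, ← Finset.sum_add_distrib]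
      refine le_trans (Finset.sum_le_sum fun P hP => ?_) (hcap 0 1)
      have hfP := hf0 P hP
      have hlenP := hlen P hP
      have hbase : 0 ≤ f P * (arcCount P 0 1 : ℝ) :=
        mul_nonneg hfP (Nat.cast_nonneg _)
      have hstep : ∀ _ : 1 ≤ arcCount P 0 1, f P ≤ f P * (arcCount P 0 1 : ℝ) := by
        intro h
        exact le_mul_of_one_le_right hfP (by exact_mod_cast h)
      by_cases c1 : P.head? = some (0:Fin 2) ∧ P.getLast? = some (0:Fin 2)
          ∧ arcCount P 0 0 = 0
      · have hac : 1 ≤ arcCount P 0 1 := by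
          rcases loop_or_cross (show (1:Fin 2) ≠ 0 by decide) hlenP c1.1 c1.2.1 with h | h
          · exact absurd (one_le_arcCount h) (by omega)
          · exact one_le_arcCount h.1
        have c2 : ¬ (P.head? = some (1:Fin 2) ∧ P.getLast? = some (1:Fin 2)
            ∧ arcCount P 1 1 = 0) := by
          rintro ⟨hh, -, -⟩; rw [c1.1] at hh; simp at hh
        have c3 : ¬ (P.head? = some (0:Fin 2) ∧ P.getLast? = some (1:Fin 2)) := by
          rintro ⟨-, hl⟩; rw [c1.2.1] at hl; simp at hl
        rw [if_pos c1, if_neg c2, if_neg c3]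
        simpa using hstep hac
      · rw [if_neg c1]
        by_cases c2 : P.head? = some (1:Fin 2) ∧ P.getLast? = some (1:Fin 2)
            ∧ arcCount P 1 1 = 0
        · have hac : 1 ≤ arcCount P 0 1 := by
            rcases loop_or_cross (show (0:Fin 2) ≠ 1 by decide) hlenP c2.1 c2.2.1 with h | h
            · exact absurd (one_le_arcCount h) (by omega)
            · exact one_le_arcCount h.2
          have c3 : ¬ (P.head? = some (0:Fin 2) ∧ P.getLast? = some (1:Fin 2)) := by
            rintro ⟨hh, -⟩; rw [c2.1] at hh; simp at hh
          rw [if_pos c2, if_neg c3]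
          simpa using hstep hac
        · rw [if_neg c2]
          by_cases c3 : P.head? = some (0:Fin 2) ∧ P.getLast? = some (1:Fin 2)
          · have hmem : (1:Fin 2) ∈ P := mem_of_getLast?' c3.2
            have hac : 1 ≤ arcCount P 0 1 :=
              one_le_arcCount (zip_mem_of_head (by decide) c3.1 hmem)
            rw [if_pos c3]
            simpa using hstep hac
          · rw [if_neg c3]
            simpa using hbase
    -- splitting flows
    have split : ∀ u : Fin 2,
        (∑ P ∈ S, if P.head? = some u ∧ P.getLast? = some u ∧ arcCount P u u ≠ 0
          then f P else 0)
        + (∑ P ∈ S, if P.head? = some u ∧ P.getLast? = some u ∧ arcCount P u u = 0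
          then f P else 0)
        = (∑ P ∈ S, if P.head? = some u ∧ P.getLast? = some u then f P else 0) := by
      intro u
      rw [← Finset.sum_add_distrib]
      refine Finset.sum_congr rfl fun P hP => ?_
      by_cases hc : P.head? = some u ∧ P.getLast? = some u
      · by_cases hz : arcCount P u u = 0
        · rw [if_pos hc, if_neg (by tauto), if_pos ⟨hc.1, hc.2, hz⟩]; ring
        · rw [if_pos hc, if_pos ⟨hc.1, hc.2, hz⟩, if_neg (by tauto)]; ring
      · rw [if_neg hc, if_neg (by tauto), if_neg (by tauto)]; ring
    -- nonnegativity of the split pieces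
    have nn : ∀ q : List (Fin 2) → Prop, ∀ _ : DecidablePred q,
        (0:ℝ) ≤ ∑ P ∈ S, if q P then f P else 0 := by
      intro q _
      refine Finset.sum_nonneg fun P hP => ?_
      by_cases h : q P
      · rw [if_pos h]; exact hf0 P hP
      · rw [if_neg h]
    -- name the pieces
    set A2 := ∑ P ∈ S, if P.head? = some (0:Fin 2) ∧ P.getLast? = some (0:Fin 2)
      ∧ arcCount P 0 0 ≠ 0 then f P else 0 with hA2
    set A1 := ∑ P ∈ S, if P.head? = some (0:Fin 2) ∧ P.getLast? = some (0:Fin 2)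
      ∧ arcCount P 0 0 = 0 then f P else 0 with hA1
    set B2 := ∑ P ∈ S, if P.head? = some (1:Fin 2) ∧ P.getLast? = some (1:Fin 2)
      ∧ arcCount P 1 1 ≠ 0 then f P else 0 with hB2
    set B1 := ∑ P ∈ S, if P.head? = some (1:Fin 2) ∧ P.getLast? = some (1:Fin 2)
      ∧ arcCount P 1 1 = 0 then f P else 0 with hB1
    have hs0 : A2 + A1 = 3 * (κ * (1 - ε)) := by rw [split 0, h00]
    have hs1 : B2 + B1 = 3 * (κ * (1 - ε)) := by rw [split 1, h11]
    have hA2b : A2 ≤ (B 0 0 : ℝ) := loopbd 0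
    have hB2b : B2 ≤ (B 1 1 : ℝ) := loopbd 1
    have hcross : A1 + B1 + 3 * (κ * ε) ≤ (B 0 1 : ℝ) := by
      rw [← h01]; exact crossbd
    have hA1n : 0 ≤ A1 := nn _ _
    have hB1n : 0 ≤ B1 := nn _ _
    -- B 0 1 ≥ 1
    have hκ0 : 0 < κ := by linarith
    have hb1 : 1 ≤ B 0 1 := by
      by_contra hb
      have : B 0 1 = 0 := by omega
      rw [this] at hcross
      simp at hcross
      nlinarith
    -- hence B 0 0 ≤ 2
    have ha2 : B 0 0 ≤ 2 := by omega
    have hd : B 1 1 = B 0 0 := by omega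
    -- cast everything
    have ca : (B 0 0 : ℝ) ≤ 2 := by exact_mod_cast ha2
    have cb : (B 0 0 : ℝ) + (B 0 1 : ℝ) = 3 := by exact_mod_cast e0
    have cd : (B 1 1 : ℝ) = (B 0 0 : ℝ) := by exact_mod_cast hd
    have hprod : κ * ε = κ^2 - 5/6 * κ := by rw [hεdef]; ring
    have key : 6*κ - 3*(κ*ε) ≤ 5 := by linarith
    have hpos : 0 < (κ - 5/6) * (2 - κ) :=
      mul_pos (by linarith) (by linarith)
    nlinarith [hpos, hprod, key]
end

section
/- For every positive integer n, every real number κ with 0 ≤ κ ≤ n/(2n−1), and every doubly stochastic n×n matrix M = (a_{i,j}), there exists an n×n matrix B of nonnegative integers with all row and column sums equal to 2n−1 such that B_{i,j} ≥ (2n−1)·κ·a_{i,j} for all i,j; that is, (M,κ) is a yes-instance of DEMAND-AWARE DIRECT THROUGHPUT. -/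
open Finset

/-- Transportation lemma: any equal nonnegative integer margins are realized by
some nonnegative integer matrix. -/
lemma exists_margins_matrix : ∀ (N : ℕ) {n : ℕ} (r c : Fin n → ℕ),
    (∑ i, r i = N) → (∑ j, c j = N) →
    ∃ D : Matrix (Fin n) (Fin n) ℕ, (∀ i, ∑ j, D i j = r i) ∧ (∀ j, ∑ i, D i j = c j) := by
  intro N
  induction N with
  | zero =>
    intro n r c hr hc
    refine ⟨fun _ _ => 0, ?_, ?_⟩
    · intro i
      have := (Finset.sum_eq_zero_iff.mp hr) i (Finset.mem_univ i)
      simp [this]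
    · intro j
      have := (Finset.sum_eq_zero_iff.mp hc) j (Finset.mem_univ j)
      simp [this]
  | succ N ih =>
    intro n r c hr hc
    have hi : ∃ i, r i ≠ 0 := by
      by_contra h
      push_neg at h
      simp [h] at hr
    have hj : ∃ j, c j ≠ 0 := by
      by_contra h
      push_neg at h
      simp [h] at hc
    obtain ⟨i, hi⟩ := hi
    obtain ⟨j, hj⟩ := hj
    have hr' : ∑ x, Function.update r i (r i - 1) x = N := by
      rw [Finset.sum_update_of_mem (Finset.mem_univ i), ← Finset.erase_eq]
      rw [← Finset.add_sum_erase _ r (Finset.mem_univ i)] at hr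
      omega
    have hc' : ∑ x, Function.update c j (c j - 1) x = N := by
      rw [Finset.sum_update_of_mem (Finset.mem_univ j), ← Finset.erase_eq]
      rw [← Finset.add_sum_erase _ c (Finset.mem_univ j)] at hc
      omega
    obtain ⟨D', hD'r, hD'c⟩ := ih _ _ hr' hc'
    refine ⟨fun a b => D' a b + if a = i ∧ b = j then 1 else 0, ?_, ?_⟩
    · intro a
      rw [Finset.sum_add_distrib, hD'r a]
      by_cases ha : a = i
      · subst ha
        rw [show (∑ b, if a = a ∧ b = j then (1:ℕ) else 0) = 1 by simp,
          Function.update_self]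
        omega
      · rw [show (∑ b, if a = i ∧ b = j then (1:ℕ) else 0) = 0 by simp [ha],
          Function.update_of_ne ha]
        omega
    · intro b
      rw [Finset.sum_add_distrib, hD'c b]
      by_cases hb : b = j
      · subst hb
        rw [show (∑ a, if a = i ∧ b = b then (1:ℕ) else 0) = 1 by simp,
          Function.update_self]
        omega
      · rw [show (∑ a, if a = i ∧ b = j then (1:ℕ) else 0) = 0 by simp [hb],
          Function.update_of_ne hb]
        omega

/-- For every positive `n`, every `0 ≤ κ ≤ n/(2n−1)`, and every doubly
stochastic `n × n` matrix `M`, `(M, κ)` is a yes-instance of DEMAND-AWARE DIRECT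
THROUGHPUT. -/
theorem demand_aware_direct_throughput_lower_bound (n : ℕ) (hn : 0 < n) (κ : ℝ)
    (hκ0 : 0 ≤ κ) (hκ1 : κ ≤ (n : ℝ) / (2 * (n : ℝ) - 1))
    (M : Matrix (Fin n) (Fin n) ℝ) (hM : DoublyStochastic M) :
    DADTYes M κ := by
  obtain ⟨hMnn, hMrow, hMcol⟩ := hM
  set A : Matrix (Fin n) (Fin n) ℕ := fun i j => ⌈(n : ℝ) * M i j⌉₊ with hA
  -- row and column sums of A are at most 2n-1
  have hAle : ∀ (f : Fin n → ℝ), (∀ k, 0 ≤ f k) → (∑ k, f k = 1) →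
      ∑ k, ⌈(n : ℝ) * f k⌉₊ ≤ 2 * n - 1 := by
    intro f hf hsum
    have hlt : ((∑ k, ⌈(n : ℝ) * f k⌉₊ : ℕ) : ℝ) < 2 * n := by
      push_cast
      calc (∑ k, (⌈(n : ℝ) * f k⌉₊ : ℝ))
          < ∑ k, ((n : ℝ) * f k + 1) := by
            apply Finset.sum_lt_sum_of_nonempty
            · exact Finset.univ_nonempty_iff.mpr ⟨⟨0, hn⟩⟩
            · intro k _
              exact Nat.ceil_lt_add_one (mul_nonneg (Nat.cast_nonneg n) (hf k))
        _ = 2 * n := by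
            rw [Finset.sum_add_distrib, ← Finset.mul_sum, hsum]
            simp
            ring
    have : (∑ k, ⌈(n : ℝ) * f k⌉₊) < 2 * n := by exact_mod_cast hlt
    omega
  have hArow : ∀ i, ∑ j, A i j ≤ 2 * n - 1 := fun i =>
    hAle (fun j => M i j) (fun j => hMnn i j) (hMrow i)
  have hAcol : ∀ j, ∑ i, A i j ≤ 2 * n - 1 := fun j =>
    hAle (fun i => M i j) (fun i => hMnn i j) (hMcol j)
  -- padding margins
  set r : Fin n → ℕ := fun i => 2 * n - 1 - ∑ j, A i j with hrdef
  set c : Fin n → ℕ := fun j => 2 * n - 1 - ∑ i, A i j with hcdef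
  have hT : ∑ i, ∑ j, A i j = ∑ j, ∑ i, A i j := Finset.sum_comm
  have hrsum : ∑ i, r i = n * (2 * n - 1) - ∑ i, ∑ j, A i j := by
    have h := Finset.sum_tsub_distrib (f := fun _ : Fin n => 2 * n - 1)
      (g := fun i => ∑ j, A i j) Finset.univ (fun i _ => hArow i)
    simpa [hrdef, Finset.sum_const, Finset.card_univ, mul_comm] using h
  have hcsum : ∑ j, c j = n * (2 * n - 1) - ∑ i, ∑ j, A i j := by
    have h := Finset.sum_tsub_distrib (f := fun _ : Fin n => 2 * n - 1)
      (g := fun j => ∑ i, A i j) Finset.univ (fun j _ => hAcol j)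
    simpa [hcdef, Finset.sum_const, Finset.card_univ, mul_comm, hT] using h
  obtain ⟨D, hDr, hDc⟩ := exists_margins_matrix _ r c hrsum hcsum
  refine ⟨fun u v => A u v + D u v, ⟨?_, ?_⟩, ?_⟩
  · intro i
    rw [Finset.sum_add_distrib, hDr i]
    have := hArow i
    simp only [hrdef]
    omega
  · intro j
    rw [Finset.sum_add_distrib, hDc j]
    have := hAcol j
    simp only [hcdef]
    omega
  · intro u v
    have h1 : (2 * (n : ℝ) - 1) * κ ≤ n := by
      have hpos : (0 : ℝ) < 2 * (n : ℝ) - 1 := by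
        have : (1 : ℝ) ≤ n := by exact_mod_cast hn
        linarith
      calc (2 * (n : ℝ) - 1) * κ ≤ (2 * (n : ℝ) - 1) * ((n : ℝ) / (2 * (n : ℝ) - 1)) :=
            mul_le_mul_of_nonneg_left hκ1 (le_of_lt hpos)
        _ = n := by field_simp
    calc (2 * (n : ℝ) - 1) * κ * M u v ≤ (n : ℝ) * M u v :=
          mul_le_mul_of_nonneg_right h1 (hMnn u v)
      _ ≤ (A u v : ℝ) := Nat.le_ceil _
      _ ≤ ((A u v + D u v : ℕ) : ℝ) := by push_cast; linarith [Nat.cast_nonneg (α := ℝ) (D u v)]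
end

section
/- For every positive integer n and every real number κ > n/(2n−1), there exists a doubly stochastic n×n matrix M_κ = (a_{i,j}) such that no n×n matrix B of nonnegative integers with all row and column sums equal to 2n−1 satisfies B_{i,j} ≥ (2n−1)·κ·a_{i,j} for all i,j; that is, (M_κ,κ) is a no-instance of DEMAND-AWARE DIRECT THROUGHPUT. -/
open Finset

/-- For every positive `n` and every `κ > n/(2n−1)`, there is a doubly
stochastic `n × n` matrix for which `(M, κ)` is a no-instance of DEMAND-AWARE DIRECT
THROUGHPUT. -/
theorem demand_aware_direct_throughput_upper_bound (n : ℕ) (hn : 0 < n) (κ : ℝ)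
    (hκ : (n : ℝ) / (2 * (n : ℝ) - 1) < κ) :
    ∃ M : Matrix (Fin n) (Fin n) ℝ, DoublyStochastic M ∧ ¬ DADTYes M κ := by
  have hn' : (0:ℝ) < n := by exact_mod_cast hn
  refine ⟨fun _ _ => 1 / n, ⟨?_, ?_, ?_⟩, ?_⟩
  · intro i j; positivity
  · intro i
    simp only [Finset.sum_const, Finset.card_univ, Fintype.card_fin, nsmul_eq_mul]
    field_simp
  · intro j
    simp only [Finset.sum_const, Finset.card_univ, Fintype.card_fin, nsmul_eq_mul]
    field_simp
  · rintro ⟨B, ⟨hrow, _⟩, hB⟩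
    set i0 : Fin n := ⟨0, hn⟩
    have h2 : ∃ j, B i0 j ≤ 1 := by
      by_contra h
      push_neg at h
      have hs : 2 * n ≤ ∑ j, B i0 j := by
        calc 2 * n = ∑ _j : Fin n, 2 := by
              simp [Finset.sum_const, Finset.card_univ, mul_comm]
          _ ≤ ∑ j, B i0 j := Finset.sum_le_sum (fun j _ => h j)
      rw [hrow i0] at hs
      omega
    obtain ⟨j, hj⟩ := h2
    have hBle : (B i0 j : ℝ) ≤ 1 := by exact_mod_cast hj
    have hkey := hB i0 j
    simp only at hkey
    have h2n : (0:ℝ) < 2 * n - 1 := by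
      have : (1:ℝ) ≤ n := by exact_mod_cast hn
      linarith
    rw [div_lt_iff₀ h2n] at hκ
    have hlt : 1 < (2 * (n : ℝ) - 1) * κ * (1 / n) := by
      rw [mul_one_div, lt_div_iff₀ hn', one_mul]
      nlinarith
    linarith
end

section
/- Let M = (a_{i,j}) be an n×n real matrix such that 0 ≤ a_{i,j} ≤ 1 for all i,j ∈ {1,…,n}, the sum of row i equals a natural number s_i for every i, and the sum of column j equals a natural number t_j for every j. Let X = Σ_{i=1}^{n} s_i. Then there exists an n×n matrix N = (b_{i,j}) with b_{i,j} ∈ {0,1} for all i,j, Σ_{j=1}^{n} b_{i,j} = s_i for all i, Σ_{i=1}^{n} b_{i,j} = t_j for all j, and Σ_{i=1}^{n} Σ_{j=1}^{n} a_{i,j}·b_{i,j} ≥ X²/n². -/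
open Finset

lemma exists_circulation {n : ℕ} (F : Finset (Fin n × Fin n)) (hne : F.Nonempty)
    (hrowp : ∀ p ∈ F, ∃ q ∈ F, q.1 = p.1 ∧ q.2 ≠ p.2)
    (hcolp : ∀ p ∈ F, ∃ q ∈ F, q.2 = p.2 ∧ q.1 ≠ p.1) :
    ∃ d : Matrix (Fin n) (Fin n) ℝ, d ≠ 0 ∧
      (∀ i j, (i, j) ∉ F → d i j = 0) ∧
      (∀ i, ∑ j, d i j = 0) ∧ (∀ j, ∑ i, d i j = 0) := by
  classical
  set R : Finset (Fin n) := F.image Prod.fst with hR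
  set C : Finset (Fin n) := F.image Prod.snd with hC
  have hRne : R.Nonempty := hne.image _
  have hCne : C.Nonempty := hne.image _
  have hcardR : 2 * R.card ≤ F.card := by
    have h1 : F.card = ∑ i ∈ R, (F.filter (fun p => p.1 = i)).card :=
      Finset.card_eq_sum_card_fiberwise (fun p hp => Finset.mem_image_of_mem _ hp)
    have h2 : ∀ i ∈ R, 2 ≤ (F.filter (fun p => p.1 = i)).card := by
      intro i hi
      obtain ⟨p, hp, hpi⟩ := Finset.mem_image.mp hi
      obtain ⟨q, hq, hq1, hq2⟩ := hrowp p hp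
      refine Finset.one_lt_card.mpr ⟨p, ?_, q, ?_, ?_⟩
      · exact Finset.mem_filter.mpr ⟨hp, hpi⟩
      · exact Finset.mem_filter.mpr ⟨hq, hq1.trans hpi⟩
      · intro h; exact hq2 (by rw [h])
    calc 2 * R.card = ∑ _i ∈ R, 2 := by rw [Finset.sum_const]; ring
    _ ≤ ∑ i ∈ R, (F.filter (fun p => p.1 = i)).card := Finset.sum_le_sum h2
    _ = F.card := h1.symm
  have hcardC : 2 * C.card ≤ F.card := by
    have h1 : F.card = ∑ j ∈ C, (F.filter (fun p => p.2 = j)).card :=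
      Finset.card_eq_sum_card_fiberwise (fun p hp => Finset.mem_image_of_mem _ hp)
    have h2 : ∀ j ∈ C, 2 ≤ (F.filter (fun p => p.2 = j)).card := by
      intro j hj
      obtain ⟨p, hp, hpj⟩ := Finset.mem_image.mp hj
      obtain ⟨q, hq, hq1, hq2⟩ := hcolp p hp
      refine Finset.one_lt_card.mpr ⟨p, ?_, q, ?_, ?_⟩
      · exact Finset.mem_filter.mpr ⟨hp, hpj⟩
      · exact Finset.mem_filter.mpr ⟨hq, hq1.trans hpj⟩
      · intro h; exact hq2 (by rw [h])
    calc 2 * C.card = ∑ _j ∈ C, 2 := by rw [Finset.sum_const]; ring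
    _ ≤ ∑ j ∈ C, (F.filter (fun p => p.2 = j)).card := Finset.sum_le_sum h2
    _ = F.card := h1.symm
  let Φ : ({x // x ∈ F} → ℝ) →ₗ[ℝ] (({x // x ∈ R} → ℝ) × ({x // x ∈ C} → ℝ)) :=
    { toFun := fun x =>
        (fun i => ∑ p : {x // x ∈ F}, if (p : Fin n × Fin n).1 = (i : Fin n) then x p else 0,
         fun j => ∑ p : {x // x ∈ F}, if (p : Fin n × Fin n).2 = (j : Fin n) then x p else 0)
      map_add' := by
        intro x y
        refine Prod.ext ?_ ?_ <;>
        · simp only [Prod.fst_add, Prod.snd_add]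
          funext i
          simp only [Pi.add_apply]
          rw [← Finset.sum_add_distrib]
          refine Finset.sum_congr rfl fun p _ => ?_
          split <;> simp
      map_smul' := by
        intro c x
        refine Prod.ext ?_ ?_ <;>
        · simp only [Prod.smul_fst, Prod.smul_snd, RingHom.id_apply]
          funext i
          simp only [Pi.smul_apply, smul_eq_mul]
          rw [Finset.mul_sum]
          refine Finset.sum_congr rfl fun p _ => ?_
          split <;> simp }
  let lam : (({x // x ∈ R} → ℝ) × ({x // x ∈ C} → ℝ)) →ₗ[ℝ] ℝ :=
    { toFun := fun rc => (∑ i, rc.1 i) - ∑ j, rc.2 j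
      map_add' := by intro x y; simp [Finset.sum_add_distrib]; ring
      map_smul' := by
        intro c x
        simp only [Prod.smul_fst, Prod.smul_snd, Pi.smul_apply, smul_eq_mul, RingHom.id_apply]
        rw [mul_sub, Finset.mul_sum, Finset.mul_sum] }
  have key : ∀ (x : {x // x ∈ F} → ℝ) (G : Finset (Fin n)) (g : Fin n × Fin n → Fin n),
      (∀ p ∈ F, g p ∈ G) →
      (∑ i : {x // x ∈ G}, ∑ p : {x // x ∈ F},
        if g (p : Fin n × Fin n) = (i : Fin n) then x p else 0) = ∑ p : {x // x ∈ F}, x p := by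
    intro x G g hg
    rw [Finset.sum_comm]
    refine Finset.sum_congr rfl fun p _ => ?_
    rw [Finset.sum_coe_sort G (fun i => if g (p : Fin n × Fin n) = i then x p else 0),
      Finset.sum_ite_eq]
    simp [hg p p.2]
  have hΦker : ∀ x, Φ x ∈ LinearMap.ker lam := by
    intro x
    simp only [LinearMap.mem_ker, lam, Φ, LinearMap.coe_mk, AddHom.coe_mk]
    rw [key x R Prod.fst (fun p hp => Finset.mem_image_of_mem _ hp),
      key x C Prod.snd (fun p hp => Finset.mem_image_of_mem _ hp), sub_self]
  -- dimension computations
  have hlamne : lam ≠ 0 := by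
    intro h
    have h2 := congrFun (congrArg DFunLike.coe h) ((fun _ => (1:ℝ)), (fun _ => (0:ℝ)))
    simp only [lam, LinearMap.coe_mk, AddHom.coe_mk, LinearMap.zero_apply] at h2
    rw [Finset.sum_const, Finset.sum_const] at h2
    simp [Fintype.card_coe] at h2
    exact absurd h2 (Finset.nonempty_iff_ne_empty.mp hRne)
  -- not injective
  have hrank : Module.finrank ℝ {x // x ∈ LinearMap.ker lam} + 1
      = R.card + C.card := by
    have h1 := LinearMap.finrank_range_add_finrank_ker lam
    have h2 : Module.finrank ℝ {x // x ∈ LinearMap.range lam} = 1 := by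
      have hle : Module.finrank ℝ {x // x ∈ LinearMap.range lam} ≤ 1 :=
        (Submodule.finrank_le _).trans_eq (Module.finrank_self ℝ)
      have hne0 : Module.finrank ℝ {x // x ∈ LinearMap.range lam} ≠ 0 := by
        intro h0
        exact hlamne (LinearMap.range_eq_bot.mp (Submodule.finrank_eq_zero.mp h0))
      omega
    have h3 : Module.finrank ℝ (({x // x ∈ R} → ℝ) × ({x // x ∈ C} → ℝ))
        = R.card + C.card := by
      rw [Module.finrank_prod, Module.finrank_fintype_fun_eq_card,
        Module.finrank_fintype_fun_eq_card, Fintype.card_coe, Fintype.card_coe]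
    rw [h2] at h1
    omega
  have hFdim : Module.finrank ℝ ({x // x ∈ F} → ℝ) = F.card := by
    rw [Module.finrank_fintype_fun_eq_card, Fintype.card_coe]
  let Φ' : ({x // x ∈ F} → ℝ) →ₗ[ℝ] {x // x ∈ LinearMap.ker lam} :=
    Φ.codRestrict (LinearMap.ker lam) hΦker
  have hninj : ¬ Function.Injective Φ' := by
    intro hinj
    have := LinearMap.finrank_le_finrank_of_injective hinj
    rw [hFdim] at this
    have hRc : 0 < R.card := Finset.card_pos.mpr hRne
    have hCc : 0 < C.card := Finset.card_pos.mpr hCne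
    omega
  rw [Function.not_injective_iff] at hninj
  obtain ⟨x, y, hxy, hne'⟩ := hninj
  have hΦxy : Φ x = Φ y := congrArg Subtype.val hxy
  set z : {x // x ∈ F} → ℝ := x - y with hz
  have hzne : z ≠ 0 := sub_ne_zero.mpr hne'
  have hΦz : Φ z = 0 := by rw [hz, map_sub, hΦxy, sub_self]
  -- define d
  set d : Matrix (Fin n) (Fin n) ℝ :=
    fun i j => if h : (i, j) ∈ F then z ⟨(i, j), h⟩ else 0 with hd
  have hdz : ∀ (p : {x // x ∈ F}), d (p : Fin n × Fin n).1 (p : Fin n × Fin n).2 = z p := by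
    intro p
    rw [hd]
    simp only
    rw [dif_pos (show ((p : Fin n × Fin n).1, (p : Fin n × Fin n).2) ∈ F from by
      rw [Prod.mk.eta]; exact p.2)]
  have hdsupp : ∀ i j, (i, j) ∉ F → d i j = 0 := fun i j hij => dif_neg hij
  have rowsum : ∀ i, ∑ j, d i j = ∑ p : {x // x ∈ F},
      if (p : Fin n × Fin n).1 = i then z p else 0 := by
    intro i
    have e1 : (∑ q ∈ (univ : Finset (Fin n × Fin n)), if q.1 = i then d q.1 q.2 else 0)
        = ∑ j, d i j := by
      rw [Fintype.sum_prod_type]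
      rw [Finset.sum_eq_single i]
      · simp
      · intro a _ ha
        apply Finset.sum_eq_zero
        intro b _
        rw [if_neg ha]
      · intro h; exact absurd (Finset.mem_univ i) h
    have e2 : (∑ q ∈ (univ : Finset (Fin n × Fin n)), if q.1 = i then d q.1 q.2 else 0)
        = ∑ q ∈ F, if q.1 = i then d q.1 q.2 else 0 := by
      symm
      apply Finset.sum_subset (Finset.subset_univ F)
      intro q _ hq
      have : d q.1 q.2 = 0 := hdsupp q.1 q.2 (by rw [Prod.mk.eta]; exact hq)
      rw [this, ite_self]
    have e3 : (∑ q ∈ F, if q.1 = i then d q.1 q.2 else 0)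
        = ∑ p : {x // x ∈ F}, if (p : Fin n × Fin n).1 = i then z p else 0 := by
      rw [← Finset.sum_attach F (fun q => if q.1 = i then d q.1 q.2 else 0)]
      exact Finset.sum_congr rfl fun p _ => by rw [hdz p]
    rw [← e1, e2, e3]
  have colsum : ∀ j, ∑ i, d i j = ∑ p : {x // x ∈ F},
      if (p : Fin n × Fin n).2 = j then z p else 0 := by
    intro j
    have e1 : (∑ q ∈ (univ : Finset (Fin n × Fin n)), if q.2 = j then d q.1 q.2 else 0)
        = ∑ i, d i j := by
      rw [Fintype.sum_prod_type_right]
      rw [Finset.sum_eq_single j]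
      · simp
      · intro a _ ha
        apply Finset.sum_eq_zero
        intro b _
        rw [if_neg ha]
      · intro h; exact absurd (Finset.mem_univ j) h
    have e2 : (∑ q ∈ (univ : Finset (Fin n × Fin n)), if q.2 = j then d q.1 q.2 else 0)
        = ∑ q ∈ F, if q.2 = j then d q.1 q.2 else 0 := by
      symm
      apply Finset.sum_subset (Finset.subset_univ F)
      intro q _ hq
      have : d q.1 q.2 = 0 := hdsupp q.1 q.2 (by rw [Prod.mk.eta]; exact hq)
      rw [this, ite_self]
    have e3 : (∑ q ∈ F, if q.2 = j then d q.1 q.2 else 0)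
        = ∑ p : {x // x ∈ F}, if (p : Fin n × Fin n).2 = j then z p else 0 := by
      rw [← Finset.sum_attach F (fun q => if q.2 = j then d q.1 q.2 else 0)]
      exact Finset.sum_congr rfl fun p _ => by rw [hdz p]
    rw [← e1, e2, e3]
  refine ⟨d, ?_, hdsupp, ?_, ?_⟩
  · intro h0
    apply hzne
    funext p
    have h1 : d (p : Fin n × Fin n).1 (p : Fin n × Fin n).2 = 0 := by rw [h0]; rfl
    rw [hdz p] at h1
    exact h1
  · intro i
    rw [rowsum i]
    by_cases hiR : i ∈ R
    · have h4 : (Φ z).1 ⟨i, hiR⟩ = 0 := by rw [hΦz]; rfl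
      simpa [Φ] using h4
    · apply Finset.sum_eq_zero
      intro p _
      rw [if_neg]
      intro h
      exact hiR (h ▸ Finset.mem_image_of_mem Prod.fst p.2)
  · intro j
    rw [colsum j]
    by_cases hjC : j ∈ C
    · have h4 : (Φ z).2 ⟨j, hjC⟩ = 0 := by rw [hΦz]; rfl
      simpa [Φ] using h4
    · apply Finset.sum_eq_zero
      intro p _
      rw [if_neg]
      intro h
      exact hjC (h ▸ Finset.mem_image_of_mem Prod.snd p.2)


noncomputable def fracSet {n : ℕ} (A : Matrix (Fin n) (Fin n) ℝ) : Finset (Fin n × Fin n) :=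
  Finset.univ.filter (fun p => A p.1 p.2 ≠ 0 ∧ A p.1 p.2 ≠ 1)

lemma mem_fracSet {n : ℕ} {A : Matrix (Fin n) (Fin n) ℝ} {p : Fin n × Fin n} :
    p ∈ fracSet A ↔ A p.1 p.2 ≠ 0 ∧ A p.1 p.2 ≠ 1 := by
  simp [fracSet]

lemma frac_int_aux {x : ℝ} (k m : ℕ) (h0 : 0 < x) (h1 : x < 1) (he : x = (m : ℝ) - (k : ℝ)) :
    False := by
  have : ((m : ℤ) : ℝ) - ((k : ℤ) : ℝ) = x := by push_cast; rw [he]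
  have h2 : (0 : ℝ) < ((m - k : ℤ) : ℝ) := by push_cast; linarith
  have h3 : ((m - k : ℤ) : ℝ) < 1 := by push_cast; linarith
  have h2' : (0 : ℤ) < m - k := by exact_mod_cast h2
  have h3' : (m - k : ℤ) < 1 := by exact_mod_cast h3
  omega

lemma row_partner {n : ℕ} {A : Matrix (Fin n) (Fin n) ℝ} {s : Fin n → ℕ}
    (hA : ∀ i j, 0 ≤ A i j ∧ A i j ≤ 1) (hrow : ∀ i, ∑ j, A i j = (s i : ℝ)) :
    ∀ p ∈ fracSet A, ∃ q ∈ fracSet A, q.1 = p.1 ∧ q.2 ≠ p.2 := by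
  intro p hp
  obtain ⟨hp0, hp1⟩ := mem_fracSet.mp hp
  obtain ⟨i, j⟩ := p
  simp only at hp0 hp1 ⊢
  by_contra hcon
  push_neg at hcon
  have hother : ∀ j' ≠ j, A i j' = 0 ∨ A i j' = 1 := by
    intro j' hj'
    by_contra hc
    push_neg at hc
    exact hj' (hcon (i, j') (mem_fracSet.mpr ⟨hc.1, hc.2⟩) rfl)
  have hsplit : (s i : ℝ) = A i j + ∑ j' ∈ univ.erase j, A i j' := by
    rw [← hrow i, ← Finset.add_sum_erase _ _ (Finset.mem_univ j)]
  have hcount : ∑ j' ∈ univ.erase j, A i j' =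
      (((univ.erase j).filter (fun j' => A i j' = 1)).card : ℝ) := by
    rw [← Finset.sum_boole]
    refine Finset.sum_congr rfl fun j' hj' => ?_
    rcases hother j' (Finset.mem_erase.mp hj').1 with h | h
    · rw [h, if_neg (by norm_num)]
    · rw [h, if_pos rfl]
  exact frac_int_aux ((univ.erase j).filter (fun j' => A i j' = 1)).card (s i)
    (lt_of_le_of_ne (hA i j).1 (Ne.symm hp0))
    (lt_of_le_of_ne (hA i j).2 hp1) (by rw [hsplit, hcount]; ring)

lemma col_partner {n : ℕ} {A : Matrix (Fin n) (Fin n) ℝ} {t : Fin n → ℕ}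
    (hA : ∀ i j, 0 ≤ A i j ∧ A i j ≤ 1) (hcol : ∀ j, ∑ i, A i j = (t j : ℝ)) :
    ∀ p ∈ fracSet A, ∃ q ∈ fracSet A, q.2 = p.2 ∧ q.1 ≠ p.1 := by
  intro p hp
  obtain ⟨hp0, hp1⟩ := mem_fracSet.mp hp
  obtain ⟨i, j⟩ := p
  simp only at hp0 hp1 ⊢
  by_contra hcon
  push_neg at hcon
  have hother : ∀ i' ≠ i, A i' j = 0 ∨ A i' j = 1 := by
    intro i' hi'
    by_contra hc
    push_neg at hc
    exact hi' (hcon (i', j) (mem_fracSet.mpr ⟨hc.1, hc.2⟩) rfl)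
  have hsplit : (t j : ℝ) = A i j + ∑ i' ∈ univ.erase i, A i' j := by
    rw [← hcol j, ← Finset.add_sum_erase _ _ (Finset.mem_univ i)]
  have hcount : ∑ i' ∈ univ.erase i, A i' j =
      (((univ.erase i).filter (fun i' => A i' j = 1)).card : ℝ) := by
    rw [← Finset.sum_boole]
    refine Finset.sum_congr rfl fun i' hi' => ?_
    rcases hother i' (Finset.mem_erase.mp hi').1 with h | h
    · rw [h, if_neg (by norm_num)]
    · rw [h, if_pos rfl]
  exact frac_int_aux ((univ.erase i).filter (fun i' => A i' j = 1)).card (t j)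
    (lt_of_le_of_ne (hA i j).1 (Ne.symm hp0))
    (lt_of_le_of_ne (hA i j).2 hp1) (by rw [hsplit, hcount]; ring)

lemma improve {n : ℕ} (M : Matrix (Fin n) (Fin n) ℝ) (s t : Fin n → ℕ) :
    ∀ (N : ℕ) (A : Matrix (Fin n) (Fin n) ℝ),
    (∀ i j, 0 ≤ A i j ∧ A i j ≤ 1) → (∀ i, ∑ j, A i j = (s i : ℝ)) →
    (∀ j, ∑ i, A i j = (t j : ℝ)) → (fracSet A).card ≤ N →
    ∃ B : Matrix (Fin n) (Fin n) ℝ, (∀ i j, B i j = 0 ∨ B i j = 1) ∧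
      (∀ i, ∑ j, B i j = (s i : ℝ)) ∧ (∀ j, ∑ i, B i j = (t j : ℝ)) ∧
      ∑ i, ∑ j, M i j * A i j ≤ ∑ i, ∑ j, M i j * B i j := by
  intro N
  induction N with
  | zero =>
    intro A hA hrow hcol hcard
    refine ⟨A, ?_, hrow, hcol, le_refl _⟩
    intro i j
    by_contra hc
    push_neg at hc
    have : (i, j) ∈ fracSet A := mem_fracSet.mpr ⟨hc.1, hc.2⟩
    have := Finset.card_pos.mpr ⟨(i, j), this⟩
    omega
  | succ N ih =>
    intro A hA hrow hcol hcard
    by_cases hzero : (fracSet A).card ≤ N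
    · exact ih A hA hrow hcol hzero
    push_neg at hzero
    have hne : (fracSet A).Nonempty := Finset.card_pos.mp (by omega)
    obtain ⟨d₀, hd0ne, hd0supp, hd0row, hd0col⟩ :=
      exists_circulation (fracSet A) hne (row_partner hA hrow) (col_partner hA hcol)
    -- WLOG the objective direction is nonnegative
    obtain ⟨d, hdne, hdsupp, hdrow, hdcol, hdobj⟩ :
        ∃ d : Matrix (Fin n) (Fin n) ℝ, d ≠ 0 ∧
          (∀ i j, (i, j) ∉ fracSet A → d i j = 0) ∧
          (∀ i, ∑ j, d i j = 0) ∧ (∀ j, ∑ i, d i j = 0) ∧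
          0 ≤ ∑ i, ∑ j, M i j * d i j := by
      rcases le_or_gt 0 (∑ i, ∑ j, M i j * d₀ i j) with h | h
      · exact ⟨d₀, hd0ne, hd0supp, hd0row, hd0col, h⟩
      · refine ⟨-d₀, neg_ne_zero.mpr hd0ne, fun i j hij => by
          simp [hd0supp i j hij], fun i => by simp [hd0row i], fun j => by simp [hd0col j], ?_⟩
        have : ∑ i, ∑ j, M i j * (-d₀) i j = -∑ i, ∑ j, M i j * d₀ i j := by
          simp
        rw [this]
        linarith
    -- choose the step size
    set S : Finset (Fin n × Fin n) := univ.filter (fun p => d p.1 p.2 ≠ 0) with hS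
    have hSne : S.Nonempty := by
      by_contra hc
      rw [Finset.not_nonempty_iff_eq_empty] at hc
      apply hdne
      funext i j
      by_contra hij
      have : (i, j) ∈ S := Finset.mem_filter.mpr ⟨Finset.mem_univ _, hij⟩
      rw [hc] at this
      exact absurd this (Finset.notMem_empty _)
    have hSfrac : ∀ p ∈ S, p ∈ fracSet A := by
      intro p hpS
      by_contra hc
      exact (Finset.mem_filter.mp hpS).2 (by rw [← Prod.mk.eta (p := p)] at hc ⊢; exact hdsupp p.1 p.2 hc)
    have hfrac_bounds : ∀ p ∈ fracSet A, 0 < A p.1 p.2 ∧ A p.1 p.2 < 1 := by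
      intro p hp
      obtain ⟨h0, h1⟩ := mem_fracSet.mp hp
      exact ⟨lt_of_le_of_ne (hA p.1 p.2).1 (Ne.symm h0), lt_of_le_of_ne (hA p.1 p.2).2 h1⟩
    set gap : Fin n × Fin n → ℝ := fun p =>
      if 0 < d p.1 p.2 then (1 - A p.1 p.2) / d p.1 p.2 else A p.1 p.2 / (-(d p.1 p.2)) with hgap
    set θ : ℝ := S.inf' hSne gap with hθ
    have hgappos : ∀ p ∈ S, 0 < gap p := by
      intro p hpS
      obtain ⟨hb0, hb1⟩ := hfrac_bounds p (hSfrac p hpS)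
      have hd : d p.1 p.2 ≠ 0 := (Finset.mem_filter.mp hpS).2
      rw [hgap]
      simp only
      split
      · apply div_pos (by linarith) (by assumption)
      · rename_i hnot
        apply div_pos (by linarith)
        rcases lt_trichotomy (d p.1 p.2) 0 with h | h | h
        · linarith
        · exact absurd h hd
        · exact absurd h hnot
    have hθpos : 0 < θ := by
      rw [hθ, Finset.lt_inf'_iff]
      exact hgappos
    have hθle : ∀ p ∈ S, θ ≤ gap p := fun p hp => Finset.inf'_le _ hp
    -- the new matrix
    set A' : Matrix (Fin n) (Fin n) ℝ := fun i j => A i j + θ * d i j with hA'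
    have hA'entry : ∀ i j, 0 ≤ A' i j ∧ A' i j ≤ 1 := by
      intro i j
      by_cases hd : d i j = 0
      · rw [hA']; simp only [hd, mul_zero, add_zero]; exact hA i j
      have hijS : (i, j) ∈ S := Finset.mem_filter.mpr ⟨Finset.mem_univ _, hd⟩
      obtain ⟨hb0, hb1⟩ := hfrac_bounds _ (hSfrac _ hijS)
      have hle := hθle _ hijS
      rw [hgap] at hle
      simp only at hle hb0 hb1
      rw [hA']
      simp only
      rcases lt_trichotomy (d i j) 0 with h | h | h
      · rw [if_neg (by linarith)] at hle
        have h1 : θ * (-(d i j)) ≤ A i j := by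
          rw [← le_div_iff₀ (by linarith)]
          exact hle
        constructor <;> nlinarith
      · exact absurd h hd
      · rw [if_pos h] at hle
        have h1 : θ * d i j ≤ 1 - A i j := by
          rw [← le_div_iff₀ h]
          exact hle
        constructor <;> nlinarith
    have hA'row : ∀ i, ∑ j, A' i j = (s i : ℝ) := by
      intro i
      rw [hA']
      simp only
      rw [Finset.sum_add_distrib, ← Finset.mul_sum, hdrow i, hrow i, mul_zero, add_zero]
    have hA'col : ∀ j, ∑ i, A' i j = (t j : ℝ) := by
      intro j
      rw [hA']
      simp only
      rw [Finset.sum_add_distrib, ← Finset.mul_sum, hdcol j, hcol j, mul_zero, add_zero]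
    -- fracSet decreases
    have hsub : fracSet A' ⊆ fracSet A := by
      intro p hp
      by_contra hc
      have hd0 : d p.1 p.2 = 0 := by
        rw [← Prod.mk.eta (p := p)] at hc; exact hdsupp p.1 p.2 hc
      have : A' p.1 p.2 = A p.1 p.2 := by rw [hA']; simp [hd0]
      obtain ⟨h0, h1⟩ := mem_fracSet.mp hp
      rw [this] at h0 h1
      exact hc (mem_fracSet.mpr ⟨h0, h1⟩)
    obtain ⟨pm, hpmS, hpm⟩ := Finset.exists_mem_eq_inf' hSne gap
    have hpmnot : pm ∉ fracSet A' := by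
      intro hc
      obtain ⟨h0, h1⟩ := mem_fracSet.mp hc
      have hd : d pm.1 pm.2 ≠ 0 := (Finset.mem_filter.mp hpmS).2
      rw [← hθ] at hpm
      rcases lt_trichotomy (d pm.1 pm.2) 0 with h | h | h
      · apply h0
        rw [hA']
        simp only
        rw [hpm, hgap]
        simp only [if_neg (by linarith : ¬ 0 < d pm.1 pm.2)]
        rw [div_mul_eq_mul_div, div_neg, mul_div_assoc, div_self hd]
        ring
      · exact absurd h hd
      · apply h1
        rw [hA']
        simp only
        rw [hpm, hgap]
        simp only [if_pos h]
        rw [div_mul_eq_mul_div, mul_div_assoc, div_self hd]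
        ring
    have hssub : fracSet A' ⊂ fracSet A :=
      ⟨hsub, fun hsup => hpmnot (hsup (hSfrac pm hpmS))⟩
    have hcard' : (fracSet A').card ≤ N := by
      have := Finset.card_lt_card hssub
      omega
    obtain ⟨B, hB01, hBrow, hBcol, hBobj⟩ := ih A' hA'entry hA'row hA'col hcard'
    refine ⟨B, hB01, hBrow, hBcol, le_trans ?_ hBobj⟩
    have : ∑ i, ∑ j, M i j * A' i j = (∑ i, ∑ j, M i j * A i j) + θ * ∑ i, ∑ j, M i j * d i j := by
      rw [hA', Finset.mul_sum]
      rw [← Finset.sum_add_distrib]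
      refine Finset.sum_congr rfl fun i _ => ?_
      rw [Finset.mul_sum, ← Finset.sum_add_distrib]
      refine Finset.sum_congr rfl fun j _ => ?_
      simp only
      ring
    rw [this]
    nlinarith

/-- rounding lemma. Given an `n × n` real matrix with entries in `[0,1]` whose
row sums `s i` and column sums `t j` are natural numbers, there is a `0/1` matrix with the
same row and column sums such that the total of the entries of `M` at positions rounded up
is at least `X²/n²`, where `X = Σ s i`. -/
theorem rounding_average_lemma (n : ℕ) (hn : 0 < n) (M : Matrix (Fin n) (Fin n) ℝ)
    (s t : Fin n → ℕ)
    (hM : ∀ i j, 0 ≤ M i j ∧ M i j ≤ 1)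
    (hrow : ∀ i, ∑ j, M i j = (s i : ℝ))
    (hcol : ∀ j, ∑ i, M i j = (t j : ℝ)) :
    ∃ N : Matrix (Fin n) (Fin n) ℕ,
      (∀ i j, N i j = 0 ∨ N i j = 1) ∧
      (∀ i, ∑ j, N i j = s i) ∧
      (∀ j, ∑ i, N i j = t j) ∧
      ((∑ i, s i : ℕ) : ℝ) ^ 2 / (n : ℝ) ^ 2 ≤ ∑ i, ∑ j, M i j * (N i j : ℝ) := by
  classical
  obtain ⟨B, hB01, hBrow, hBcol, hBobj⟩ := improve M s t _ M hM hrow hcol le_rfl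
  set N : Matrix (Fin n) (Fin n) ℕ := fun i j => if B i j = 1 then 1 else 0 with hN
  have hcast : ∀ i j, (N i j : ℝ) = B i j := by
    intro i j
    rw [hN]
    simp only
    split
    · rename_i h; rw [h]; norm_num
    · rename_i h
      rcases hB01 i j with h0 | h1
      · rw [h0]; norm_num
      · exact absurd h1 h
  refine ⟨N, ?_, ?_, ?_, ?_⟩
  · intro i j
    rw [hN]
    simp only
    split <;> simp
  · intro i
    have : ((∑ j, N i j : ℕ) : ℝ) = ((s i : ℕ) : ℝ) := by
      push_cast
      rw [Finset.sum_congr rfl (fun j _ => hcast i j), hBrow i]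
    exact_mod_cast this
  · intro j
    have : ((∑ i, N i j : ℕ) : ℝ) = ((t j : ℕ) : ℝ) := by
      push_cast
      rw [Finset.sum_congr rfl (fun i _ => hcast i j), hBcol j]
    exact_mod_cast this
  · have hX : ∑ i, ∑ j, M i j = ((∑ i, s i : ℕ) : ℝ) := by
      push_cast
      exact Finset.sum_congr rfl fun i _ => hrow i
    have hCS : (∑ i, ∑ j, M i j) ^ 2 ≤ (n : ℝ) ^ 2 * ∑ i, ∑ j, M i j * M i j := by
      have h1 := Finset.sum_mul_sq_le_sq_mul_sq (univ : Finset (Fin n × Fin n))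
        (fun p => M p.1 p.2) (fun _ => (1 : ℝ))
      simp only [mul_one, one_pow, Finset.sum_const, Finset.card_univ, nsmul_eq_mul] at h1
      rw [Fintype.sum_prod_type] at h1
      calc (∑ i, ∑ j, M i j) ^ 2 ≤ (∑ p : Fin n × Fin n, M p.1 p.2 ^ 2) *
            (Fintype.card (Fin n × Fin n) : ℝ) := h1
        _ = (n : ℝ) ^ 2 * ∑ i, ∑ j, M i j * M i j := by
            rw [Fintype.sum_prod_type]
            simp only [Fintype.card_prod, Fintype.card_fin]
            push_cast
            rw [mul_comm]
            congr 1
            · ring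
            · exact Finset.sum_congr rfl fun i _ => Finset.sum_congr rfl fun j _ => by ring
    have hn2 : (0 : ℝ) < (n : ℝ) ^ 2 := by positivity
    have step1 : ((∑ i, s i : ℕ) : ℝ) ^ 2 / (n : ℝ) ^ 2 ≤ ∑ i, ∑ j, M i j * M i j := by
      rw [div_le_iff₀ hn2, ← hX, mul_comm]
      exact hCS
    calc ((∑ i, s i : ℕ) : ℝ) ^ 2 / (n : ℝ) ^ 2 ≤ ∑ i, ∑ j, M i j * M i j := step1
      _ ≤ ∑ i, ∑ j, M i j * B i j := hBobj
      _ = ∑ i, ∑ j, M i j * (N i j : ℝ) := by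
          exact Finset.sum_congr rfl fun i _ => Finset.sum_congr rfl fun j _ => by rw [hcast i j]
end

section
/- For every positive integer n, every doubly stochastic n×n matrix M, and every real number κ with 0 ≤ κ ≤ (7n−4)/(8n−4), the pair (M,κ) is a yes-instance of DEMAND-AWARE WEAK DIRECT THROUGHPUT; that is, there exist an n×n matrix B of nonnegative integers with all row and column sums equal to 2n−1 and an n×n matrix C with 0 ≤ C_{u,v} ≤ M_{u,v} for all u,v, Σ_{u,v} C_{u,v} ≥ κ·n, and B_{u,v} ≥ (2n−1)·C_{u,v} for all u,v. -/
open Finset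

/-!
Scale by `s = 2n - 1` and split `A = sM` as `⌊A⌋ + F` with `0 ≤ F < 1`. The row and column
sums of `F` are integers, so `F` can be rounded to a 0-1 matrix `G` with the same margins and
`∑ F * G ≥ ∑ F * F`: as long as `F` has non-integral entries, each row and column containing one
contains two, hence there are at least as many such entries as rows plus columns involved, and a
dimension count yields a nonzero circulation on them with zero margins; moving along it in the
direction that does not decrease `∑ F * x` makes one more entry integral. Then `B = ⌊A⌋ + G` is
`s`-regular and `min A B ≥ ⌊A⌋ + F * G` entrywise, so `∑ min A B ≥ sn - ∑ F (1 - F) ≥ sn - n² / 4`,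
which is `s` times the required `(7n - 4) / (8n - 4) · n`.
-/

theorem Finset.exists_ne_notMem_of_sum_mem {α G : Type*} [AddCommGroup G] {H : AddSubgroup G}
    {s : Finset α} {f : α → G} (hs : ∑ a ∈ s, f a ∈ H) {a : α} (ha : a ∈ s) (hfa : f a ∉ H) :
    ∃ b ∈ s, b ≠ a ∧ f b ∉ H := by
  classical
  by_contra! h
  refine hfa ?_
  rw [← add_sum_erase s f ha] at hs
  simpa using H.sub_mem hs (H.sum_mem fun b hb => h b (mem_of_mem_erase hb) (ne_of_mem_erase hb))

theorem Finset.two_mul_card_image_le {α β : Type*} [DecidableEq β] {s : Finset α} {f : α → β}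
    (hs : ∀ a ∈ s, ∃ b ∈ s, b ≠ a ∧ f b = f a) : 2 * #(s.image f) ≤ #s := by
  rw [card_eq_sum_card_image f s, mul_comm, ← smul_eq_mul]
  refine card_nsmul_le_sum _ _ _ fun c hc => ?_
  obtain ⟨a, ha, rfl⟩ := mem_image.1 hc
  obtain ⟨b, hb, hba, hfb⟩ := hs a ha
  exact one_lt_card.2 ⟨a, by simp [ha], b, by simp [hb, hfb], hba.symm⟩

theorem natCast_floor_of_mem_zmultiples_one {a : ℝ} (ha : a ∈ AddSubgroup.zmultiples 1)
    (ha₀ : 0 ≤ a) : (⌊a⌋₊ : ℝ) = a := by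
  obtain ⟨k, rfl⟩ := AddSubgroup.mem_zmultiples_iff.1 ha
  lift k to ℕ using by simpa using ha₀
  simp

-- the time `t ≥ 0` at which `a + t * b` leaves `[0, 1]`, for `a ∈ [0, 1]` and `b ≠ 0`
noncomputable def exitTime (a b : ℝ) : ℝ := if 0 < b then (1 - a) / b else -a / b

theorem exitTime_nonneg {a : ℝ} (ha : a ∈ Set.Icc 0 1) (b : ℝ) : 0 ≤ exitTime a b := by
  unfold exitTime
  split_ifs with hb
  · exact div_nonneg (by linarith [ha.2]) hb.le
  · exact div_nonneg_of_nonpos (by linarith [ha.1]) (not_lt.1 hb)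

theorem add_mul_mem_Icc_of_le_exitTime {a b t : ℝ} (ha : a ∈ Set.Icc 0 1) (ht : 0 ≤ t)
    (hte : t ≤ exitTime a b) : a + t * b ∈ Set.Icc 0 1 := by
  unfold exitTime at hte
  obtain ⟨ha0, ha1⟩ := ha
  split_ifs at hte with hb
  · have := (le_div_iff₀ hb).1 hte
    constructor <;> nlinarith
  · rcases (not_lt.1 hb).lt_or_eq with hb | rfl
    · have := (le_div_iff_of_neg hb).1 hte
      constructor <;> nlinarith
    · simpa using And.intro ha0 ha1

theorem add_exitTime_mul_mem_zmultiples {a b : ℝ} (hb : b ≠ 0) :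
    a + exitTime a b * b ∈ AddSubgroup.zmultiples (1 : ℝ) := by
  unfold exitTime
  split_ifs <;> simp [div_mul_cancel₀ _ hb]

section Rounding

variable {ι κ : Type*} [Fintype ι] [Fintype κ]

open Classical in
noncomputable def fracEntries (x : Matrix ι κ ℝ) : Finset (ι × κ) :=
  {p | x p.1 p.2 ∉ AddSubgroup.zmultiples (1 : ℝ)}

theorem mem_fracEntries {x : Matrix ι κ ℝ} {p : ι × κ} :
    p ∈ fracEntries x ↔ x p.1 p.2 ∉ AddSubgroup.zmultiples (1 : ℝ) := by
  simp [fracEntries]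

theorem exists_add_smul_fracEntries_ssubset {x y : Matrix ι κ ℝ} (hx : ∀ i j, x i j ∈ Set.Icc 0 1)
    (hy : y ≠ 0) (hyx : ∀ i j, (i, j) ∉ fracEntries x → y i j = 0) :
    ∃ t, 0 ≤ t ∧ (∀ i j, x i j + t * y i j ∈ Set.Icc 0 1) ∧
      fracEntries (x + t • y) ⊂ fracEntries x := by
  classical
  obtain ⟨i₀, j₀, hy₀⟩ : ∃ i j, y i j ≠ 0 := by
    by_contra! h
    exact hy (Matrix.ext h)
  obtain ⟨p, hp, hmin⟩ := exists_min_image {p : ι × κ | y p.1 p.2 ≠ 0}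
    (fun p => exitTime (x p.1 p.2) (y p.1 p.2)) ⟨(i₀, j₀), by simpa using hy₀⟩
  simp only [mem_filter, mem_univ, true_and] at hp hmin
  set t := exitTime (x p.1 p.2) (y p.1 p.2)
  have ht : 0 ≤ t := exitTime_nonneg (hx _ _) _
  have hstay : ∀ q ∉ fracEntries x, q ∉ fracEntries (x + t • y) := by
    intro q hq
    simpa [mem_fracEntries, hyx q.1 q.2 hq] using hq
  refine ⟨t, ht, fun i j => ?_, ssubset_iff_of_subset ?_ |>.2 ⟨p, ?_, ?_⟩⟩
  · by_cases hij : y i j = 0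
    · simpa [hij] using hx i j
    · exact add_mul_mem_Icc_of_le_exitTime (hx i j) ht (hmin (i, j) hij)
  · exact fun q => not_imp_not.1 (hstay q)
  · exact not_not.1 (mt (hyx p.1 p.2) hp)
  · simpa [mem_fracEntries] using add_exitTime_mul_mem_zmultiples hp

variable [DecidableEq ι] [DecidableEq κ]

theorem exists_ne_zero_supported_rowSum_colSum_eq_zero (E : Finset (ι × κ)) (hE : E.Nonempty)
    (hrow : ∀ p ∈ E, ∃ q ∈ E, q ≠ p ∧ q.1 = p.1) (hcol : ∀ p ∈ E, ∃ q ∈ E, q ≠ p ∧ q.2 = p.2) :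
    ∃ y : Matrix ι κ ℝ, y ≠ 0 ∧ (∀ i j, (i, j) ∉ E → y i j = 0) ∧
      (∀ i, ∑ j, y i j = 0) ∧ (∀ j, ∑ i, y i j = 0) := by
  let g : ι × κ → (ι → ℝ) × (κ → ℝ) := fun p => (Pi.single p.1 1, Pi.single p.2 1)
  obtain ⟨⟨i₀, j₀⟩, hp₀⟩ := hE
  -- the `#E` vectors `g p` lie in the span of `#rows + #columns - 1` vectors
  let T : Finset ((ι → ℝ) × (κ → ℝ)) := (E.image Prod.fst).image (fun i => g (i, j₀)) ∪
    ((E.image Prod.snd).erase j₀).image (fun j => (0, Pi.single j 1 - Pi.single j₀ 1))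
  have hgT : ∀ p ∈ E, g p ∈ Submodule.span ℝ (T : Set _) := by
    rintro ⟨i, j⟩ hp
    have hi : g (i, j₀) ∈ Submodule.span ℝ (T : Set _) :=
      Submodule.subset_span (mem_union_left _ (mem_image_of_mem _ (mem_image_of_mem Prod.fst hp)))
    by_cases hj : j = j₀
    · exact hj ▸ hi
    · have hj' : ((0 : ι → ℝ), (Pi.single j 1 - Pi.single j₀ 1 : κ → ℝ)) ∈
          Submodule.span ℝ (T : Set _) :=
        Submodule.subset_span (mem_union_right _
          (mem_image_of_mem _ (mem_erase.2 ⟨hj, mem_image_of_mem Prod.snd hp⟩)))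
      convert Submodule.add_mem _ hi hj' using 1
      simp [g]
  have hT : #T < #E := by
    have hj₀ : j₀ ∈ E.image Prod.snd := mem_image_of_mem _ hp₀
    calc #T ≤ #(E.image Prod.fst) + #((E.image Prod.snd).erase j₀) :=
          (card_union_le _ _).trans (add_le_add card_image_le card_image_le)
      _ < #E := by
          have := two_mul_card_image_le hrow
          have := two_mul_card_image_le hcol
          have := card_pos.2 ⟨_, hj₀⟩
          rw [card_erase_of_mem hj₀]
          omega
  have hdep : ¬ LinearIndepOn ℝ g (E : Set (ι × κ)) := by
    intro hli
    have hspan : Submodule.span ℝ (Set.range fun p : E => g p) ≤ Submodule.span ℝ (T : Set _) :=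
      Submodule.span_le.2 (by rintro _ ⟨p, rfl⟩; exact hgT p p.2)
    have := (finrank_span_eq_card hli).symm.trans_le
      ((Submodule.finrank_mono hspan).trans (finrank_span_finset_le_card T))
    simp at this
    omega
  obtain ⟨f, hf, p, hp, hfp⟩ := not_linearIndepOn_finset_iff.1 hdep
  have hf' : ∑ p, (if p ∈ E then f p else 0) • g p = 0 := by
    simpa [ite_smul, Finset.sum_ite_mem] using hf
  refine ⟨fun i j => if (i, j) ∈ E then f (i, j) else 0, fun h => hfp ?_, fun i j h => if_neg h,
    fun i => ?_, fun j => ?_⟩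
  · simpa [hp] using congrFun (congrFun h p.1) p.2
  · have := congrFun (congrArg Prod.fst hf') i
    simp only [g, Prod.fst_sum, Prod.smul_fst, Finset.sum_apply, Pi.smul_apply, Pi.single_apply,
      smul_eq_mul, mul_ite, mul_one, mul_zero, Fintype.sum_prod_type] at this
    simpa [Finset.sum_ite_irrel] using this
  · have := congrFun (congrArg Prod.snd hf') j
    simp only [g, Prod.snd_sum, Prod.smul_snd, Finset.sum_apply, Pi.smul_apply, Pi.single_apply,
      smul_eq_mul, mul_ite, mul_one, mul_zero, Fintype.sum_prod_type] at this
    simpa using this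

theorem exists_fracEntries_ssubset_sum_mul_le (w x : Matrix ι κ ℝ)
    (hx : ∀ i j, x i j ∈ Set.Icc 0 1) (hrow : ∀ i, ∑ j, x i j ∈ AddSubgroup.zmultiples (1 : ℝ))
    (hcol : ∀ j, ∑ i, x i j ∈ AddSubgroup.zmultiples (1 : ℝ)) (hfrac : (fracEntries x).Nonempty) :
    ∃ x' : Matrix ι κ ℝ, (∀ i j, x' i j ∈ Set.Icc 0 1) ∧ fracEntries x' ⊂ fracEntries x ∧
      (∀ i, ∑ j, x' i j = ∑ j, x i j) ∧ (∀ j, ∑ i, x' i j = ∑ i, x i j) ∧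
      ∑ i, ∑ j, w i j * x i j ≤ ∑ i, ∑ j, w i j * x' i j := by
  -- a row or column with integral sum cannot contain exactly one non-integral entry
  obtain ⟨y, hy, hyx, hyr, hyc⟩ := exists_ne_zero_supported_rowSum_colSum_eq_zero _ hfrac
    (fun p hp => by
      obtain ⟨j, -, hj, hxj⟩ :=
        exists_ne_notMem_of_sum_mem (hrow p.1) (mem_univ p.2) (mem_fracEntries.1 hp)
      exact ⟨(p.1, j), mem_fracEntries.2 hxj, fun h => hj (congrArg Prod.snd h), rfl⟩)
    (fun p hp => by
      obtain ⟨i, -, hi, hxi⟩ := exists_ne_notMem_of_sum_mem (f := fun i => x i p.2)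
        (hcol p.2) (mem_univ p.1) (mem_fracEntries.1 hp)
      exact ⟨(i, p.2), mem_fracEntries.2 hxi, fun h => hi (congrArg Prod.fst h), rfl⟩)
  obtain ⟨z, hz, hzx, hzr, hzc, hwz⟩ : ∃ z : Matrix ι κ ℝ, z ≠ 0 ∧
      (∀ i j, (i, j) ∉ fracEntries x → z i j = 0) ∧ (∀ i, ∑ j, z i j = 0) ∧
      (∀ j, ∑ i, z i j = 0) ∧ 0 ≤ ∑ i, ∑ j, w i j * z i j := by
    rcases le_total 0 (∑ i, ∑ j, w i j * y i j) with h | h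
    · exact ⟨y, hy, hyx, hyr, hyc, h⟩
    · exact ⟨-y, neg_ne_zero.2 hy, by simpa using hyx, by simpa using hyr, by simpa using hyc,
        by simpa using h⟩
  obtain ⟨t, ht, hxt, hss⟩ := exists_add_smul_fracEntries_ssubset hx hz hzx
  refine ⟨x + t • z, fun i j => hxt i j, hss, fun i => ?_, fun j => ?_, ?_⟩
  · simp [sum_add_distrib, ← mul_sum, hzr]
  · simp [sum_add_distrib, ← mul_sum, hzc]
  · simpa [mul_add, sum_add_distrib, mul_left_comm _ t, ← mul_sum] using mul_nonneg ht hwz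

theorem exists_zero_one_matrix_sum_mul_le (w x : Matrix ι κ ℝ)
    (hx : ∀ i j, x i j ∈ Set.Icc 0 1) (hrow : ∀ i, ∑ j, x i j ∈ AddSubgroup.zmultiples (1 : ℝ))
    (hcol : ∀ j, ∑ i, x i j ∈ AddSubgroup.zmultiples (1 : ℝ)) :
    ∃ G : Matrix ι κ ℕ, (∀ i j, G i j ≤ 1) ∧ (∀ i, ∑ j, (G i j : ℝ) = ∑ j, x i j) ∧
      (∀ j, ∑ i, (G i j : ℝ) = ∑ i, x i j) ∧
      ∑ i, ∑ j, w i j * x i j ≤ ∑ i, ∑ j, w i j * G i j := by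
  induction hk : #(fracEntries x) using Nat.strong_induction_on generalizing x with
  | _ k ih =>
  rcases (fracEntries x).eq_empty_or_nonempty with h | h
  · have hG : ∀ i j, (⌊x i j⌋₊ : ℝ) = x i j := fun i j =>
      natCast_floor_of_mem_zmultiples_one
        (not_not.1 fun hij => (eq_empty_iff_forall_notMem.1 h (i, j)) (mem_fracEntries.2 hij))
        (hx i j).1
    exact ⟨fun i j => ⌊x i j⌋₊, fun i j => Nat.floor_le_one_of_le_one (hx i j).2,
      by simp [hG], by simp [hG], by simp [hG]⟩
  · obtain ⟨x', hx', hss, hr', hc', hw'⟩ := exists_fracEntries_ssubset_sum_mul_le w x hx hrow hcol h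
    obtain ⟨G, hG, hGr, hGc, hGw⟩ := ih _ (hk ▸ card_lt_card hss) x' hx'
      (fun i => hr' i ▸ hrow i) (fun j => hc' j ▸ hcol j) rfl
    exact ⟨G, hG, fun i => (hGr i).trans (hr' i), fun j => (hGc j).trans (hc' j), hw'.trans hGw⟩

theorem natCast_floor_add_fract_mul_le_min {a : ℝ} (ha : 0 ≤ a) {g : ℕ} (hg : g ≤ 1) :
    (⌊a⌋₊ : ℝ) + (a - ⌊a⌋₊) * g ≤ min a ((⌊a⌋₊ + g : ℕ) : ℝ) := by
  have h₁ := Nat.floor_le ha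
  have h₂ := Nat.lt_floor_add_one a
  rcases Nat.le_one_iff_eq_zero_or_eq_one.1 hg with rfl | rfl <;> simp [h₁, h₂.le]

theorem exists_nat_matrix_sum_min_ge (A : Matrix ι κ ℝ) (hA : ∀ i j, 0 ≤ A i j) (r : ι → ℕ)
    (c : κ → ℕ) (hr : ∀ i, ∑ j, A i j = r i) (hc : ∀ j, ∑ i, A i j = c j) :
    ∃ B : Matrix ι κ ℕ, (∀ i, ∑ j, B i j = r i) ∧ (∀ j, ∑ i, B i j = c j) ∧
      ∑ i, ∑ j, A i j - Fintype.card ι * Fintype.card κ / 4 ≤ ∑ i, ∑ j, min (A i j) (B i j) := by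
  set F : Matrix ι κ ℝ := fun i j => A i j - ⌊A i j⌋₊ with hF
  have hF01 : ∀ i j, F i j ∈ Set.Icc 0 1 := fun i j =>
    ⟨sub_nonneg.2 (Nat.floor_le (hA i j)), by linarith [Nat.lt_floor_add_one (A i j)]⟩
  have hint : ∀ m : ℕ, (m : ℝ) ∈ AddSubgroup.zmultiples (1 : ℝ) := fun m => by
    simpa using AddSubgroup.intCast_mem_zmultiples_one (R := ℝ) m
  obtain ⟨G, hG, hGr, hGc, hGF⟩ := exists_zero_one_matrix_sum_mul_le F F hF01
    (fun i => by simpa [hF, sum_sub_distrib, hr] using sub_mem (hint _) (sum_mem fun _ _ => hint _))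
    (fun j => by simpa [hF, sum_sub_distrib, hc] using sub_mem (hint _) (sum_mem fun _ _ => hint _))
  refine ⟨fun i j => ⌊A i j⌋₊ + G i j, fun i => ?_, fun j => ?_, ?_⟩
  · have := hGr i
    simp only [hF, sum_sub_distrib, hr] at this
    exact_mod_cast (by push_cast [sum_add_distrib]; linarith :
      ∑ j, ((⌊A i j⌋₊ + G i j : ℕ) : ℝ) = r i)
  · have := hGc j
    simp only [hF, sum_sub_distrib, hc] at this
    exact_mod_cast (by push_cast [sum_add_distrib]; linarith :
      ∑ i, ((⌊A i j⌋₊ + G i j : ℕ) : ℝ) = c j)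
  · have hquarter : ∑ i, ∑ j, (F i j - F i j * F i j) ≤ ∑ i : ι, ∑ j : κ, (1 / 4 : ℝ) :=
      sum_le_sum fun i _ => sum_le_sum fun j _ => by nlinarith [sq_nonneg (F i j - 1 / 2)]
    calc ∑ i, ∑ j, A i j - Fintype.card ι * Fintype.card κ / 4
        ≤ ∑ i, ∑ j, (A i j - F i j + F i j * F i j) := by
          simp only [sum_add_distrib, sum_sub_distrib, sum_const, card_univ] at hquarter ⊢
          simp only [nsmul_eq_mul] at hquarter
          linarith
      _ ≤ ∑ i, ∑ j, (A i j - F i j + F i j * G i j) := by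
          simp only [sum_add_distrib]
          linarith
      _ ≤ ∑ i, ∑ j, min (A i j) (⌊A i j⌋₊ + G i j : ℕ) :=
          sum_le_sum fun i _ => sum_le_sum fun j _ => by
            simpa [hF] using natCast_floor_add_fract_mul_le_min (hA i j) (hG i j)

end Rounding

theorem weak_direct_throughput_lower_bound_general (n : ℕ) (hn : 0 < n)
    (M : Matrix (Fin n) (Fin n) ℝ) (hM : DoublyStochastic M) (κ : ℝ)
    (h1 : κ ≤ (7 * (n : ℝ) - 4) / (8 * (n : ℝ) - 4)) :
    DAWDTYes M κ := by
  obtain ⟨hM₀, hMr, hMc⟩ := hM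
  have hs : ((2 * n - 1 : ℕ) : ℝ) = 2 * n - 1 := by
    rw [Nat.cast_sub (by omega)]; push_cast; ring
  have hs₀ : (0 : ℝ) < 2 * n - 1 := by
    have : (1 : ℝ) ≤ n := by exact_mod_cast hn
    linarith
  obtain ⟨B, hBr, hBc, hB⟩ := exists_nat_matrix_sum_min_ge (fun u v => (2 * n - 1) * M u v)
    (fun u v => mul_nonneg hs₀.le (hM₀ u v)) (fun _ => 2 * n - 1) (fun _ => 2 * n - 1)
    (fun u => by simp [← mul_sum, hMr, hs]) (fun v => by simp [← mul_sum, hMc, hs])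
  refine ⟨B, fun u v => min (M u v) (B u v / (2 * n - 1)), ⟨hBr, hBc⟩,
    fun u v => ⟨le_min (hM₀ u v) (by positivity), min_le_left _ _⟩, ?_, fun u v => ?_⟩
  · have hmin : ∀ u v, min ((2 * n - 1) * M u v) (B u v) =
        (2 * n - 1) * min (M u v) (B u v / (2 * n - 1)) := fun u v => by
      rw [mul_min_of_nonneg _ _ hs₀.le, mul_div_cancel₀ _ hs₀.ne']
    simp only [hmin, ← mul_sum, hMr, Fintype.card_fin, mul_one, sum_const, card_univ,
      nsmul_eq_mul] at hB
    calc κ * n ≤ (7 * n - 4) / (8 * n - 4) * n := by gcongr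
      _ = ((2 * n - 1) * n - n * n / 4) / (2 * n - 1) := by
          rw [show (8 * n - 4 : ℝ) = 4 * (2 * n - 1) by ring]
          field_simp
          ring
      _ ≤ ∑ u, ∑ v, min (M u v) (B u v / (2 * n - 1)) := by
          rw [div_le_iff₀' hs₀]
          linarith
  · calc (2 * n - 1) * min (M u v) (B u v / (2 * n - 1))
        ≤ (2 * n - 1) * (B u v / (2 * n - 1)) := by gcongr; exact min_le_right _ _
      _ = B u v := mul_div_cancel₀ _ hs₀.ne'

/-- For every positive `n`, every doubly stochastic `n × n` matrix `M`, and
every `0 ≤ κ ≤ (7n−4)/(8n−4)`, `(M, κ)` is a yes-instance of DEMAND-AWARE WEAK DIRECT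
THROUGHPUT. -/
theorem weak_direct_throughput_lower_bound (n : ℕ) (hn : 0 < n)
    (M : Matrix (Fin n) (Fin n) ℝ) (hM : DoublyStochastic M) (κ : ℝ)
    (h0 : 0 ≤ κ) (h1 : κ ≤ (7 * (n : ℝ) - 4) / (8 * (n : ℝ) - 4)) :
    DAWDTYes M κ :=
  weak_direct_throughput_lower_bound_general n hn M hM κ h1
end

section
/- Let N be the doubly stochastic 2×2 matrix (1/9)·[[5,4],[4,5]]. For every real κ > 8/9, the pair (N,κ) is a no-instance of DEMAND-AWARE WEAK THROUGHPUT; that is, there are no 2×2 matrix B of nonnegative integers with all row and column sums equal to 3 and 2×2 matrix C with 0 ≤ C_{u,v} ≤ N_{u,v} for all u,v and Σ_{u,v} C_{u,v} ≥ 2κ such that B can host C. -/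
open Finset

section AuxWeakThroughput

private lemma arc_cons' (a b : Fin 2) (t : List (Fin 2)) (p q : Fin 2) :
    arcCount (a :: b :: t) p q = (if (a, b) = (p, q) then 1 else 0) + arcCount (b :: t) p q := by
  simp [arcCount, List.count_cons]
  split_ifs <;> omega

private lemma tele' (P : List (Fin 2)) : ∀ u v : Fin 2, P.head? = some u → P.getLast? = some v →
    (arcCount P 0 1 : ℤ) - arcCount P 1 0 = (v : ℤ) - (u : ℤ) := by
  induction P with
  | nil => intro u v h; simp at h
  | cons a t ih =>
    intro u v hu hv
    simp only [List.head?_cons, Option.some_inj] at hu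
    subst hu
    cases t with
    | nil =>
      simp only [List.getLast?_singleton, Option.some_inj] at hv
      subst hv
      simp [arcCount]
    | cons b t' =>
      rw [List.getLast?_cons_cons] at hv
      have h := ih b v rfl hv
      have hd : ((if (a,b) = ((0:Fin 2),(1:Fin 2)) then (1:ℕ) else 0) : ℤ)
          - ((if (a,b) = ((1:Fin 2),(0:Fin 2)) then (1:ℕ) else 0) : ℤ) = (b:ℤ) - (a:ℤ) := by
        fin_cases a <;> fin_cases b <;> simp <;> decide
      rw [arc_cons', arc_cons']
      push_cast at hd h ⊢
      linarith [h, hd]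

private lemma cross01' (P : List (Fin 2)) (hu : P.head? = some 0) (hv : P.getLast? = some 1) :
    1 ≤ arcCount P 0 1 := by
  have h := tele' P 0 1 hu hv
  simp at h
  omega

private lemma cross10' (P : List (Fin 2)) (hu : P.head? = some 1) (hv : P.getLast? = some 0) :
    1 ≤ arcCount P 1 0 := by
  have h := tele' P 1 0 hu hv
  simp at h
  omega

private lemma crosseq' (P : List (Fin 2)) (u : Fin 2) (hu : P.head? = some u)
    (hv : P.getLast? = some u) : arcCount P 0 1 = arcCount P 1 0 := by
  have h := tele' P u u hu hv
  omega

private lemma loop0' (P : List (Fin 2)) (hl : 2 ≤ P.length) (hu : P.head? = some 0)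
    (hz : arcCount P 0 1 = 0) : 1 ≤ arcCount P 0 0 := by
  cases P with
  | nil => simp at hu
  | cons a t =>
    cases t with
    | nil => simp at hl
    | cons b t' =>
      simp only [List.head?_cons, Option.some_inj] at hu
      subst hu
      rw [arc_cons'] at hz ⊢
      fin_cases b <;> simp_all

private lemma loop1' (P : List (Fin 2)) (hl : 2 ≤ P.length) (hu : P.head? = some 1)
    (hz : arcCount P 1 0 = 0) : 1 ≤ arcCount P 1 1 := by
  cases P with
  | nil => simp at hu
  | cons a t =>
    cases t with
    | nil => simp at hl
    | cons b t' =>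
      simp only [List.head?_cons, Option.some_inj] at hu
      subst hu
      rw [arc_cons'] at hz ⊢
      fin_cases b <;> simp_all

private lemma sum_ite_nonneg' (S : Finset (List (Fin 2))) (f : List (Fin 2) → ℝ)
    (hf : ∀ P ∈ S, 0 ≤ f P) (p : List (Fin 2) → Prop) [DecidablePred p] :
    0 ≤ ∑ P ∈ S, if p P then f P else 0 := by
  refine Finset.sum_nonneg fun P hP => ?_
  split_ifs
  · exact hf P hP
  · exact le_refl 0

private lemma sum_ite_split' (S : Finset (List (Fin 2))) (f : List (Fin 2) → ℝ)
    (p q : List (Fin 2) → Prop) [DecidablePred p] [DecidablePred q] :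
    (∑ P ∈ S, if p P ∧ q P then f P else 0) + (∑ P ∈ S, if p P ∧ ¬ q P then f P else 0)
      = ∑ P ∈ S, if p P then f P else 0 := by
  rw [← Finset.sum_add_distrib]
  refine Finset.sum_congr rfl fun P _ => ?_
  by_cases h1 : p P <;> by_cases h2 : q P <;> simp [h1, h2]

private lemma ite3_le' (A B C : Prop) [Decidable A] [Decidable B] [Decidable C] (c r : ℝ)
    (hc : 0 ≤ c) (hr : 0 ≤ r)
    (hAB : A → B → False) (hAC : A → C → False) (hBC : B → C → False)
    (hA : A → 1 ≤ r) (hB : B → 1 ≤ r) (hC : C → 1 ≤ r) :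
    (if A then c else 0) + (if B then c else 0) + (if C then c else 0) ≤ c * r := by
  by_cases hA' : A
  · have hB' : ¬ B := fun h => hAB hA' h
    have hC' : ¬ C := fun h => hAC hA' h
    simp only [if_pos hA', if_neg hB', if_neg hC', add_zero]
    nlinarith [hA hA']
  · by_cases hB' : B
    · have hC' : ¬ C := fun h => hBC hB' h
      simp only [if_neg hA', if_pos hB', if_neg hC', add_zero, zero_add]
      nlinarith [hB hB']
    · by_cases hC' : C
      · simp only [if_neg hA', if_neg hB', if_pos hC', add_zero, zero_add]
        nlinarith [hC hC']
      · simp only [if_neg hA', if_neg hB', if_neg hC', add_zero]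
        positivity

end AuxWeakThroughput

/-- For `N = (1/9)·[[5,4],[4,5]]` and every `κ > 8/9`, `(N, κ)` is a
no-instance of DEMAND-AWARE WEAK THROUGHPUT. -/
theorem weak_throughput_upper_bound (κ : ℝ) (hκ : 8 / 9 < κ) :
    ¬ DAWTYes (!![5/9, 4/9; 4/9, 5/9] : Matrix (Fin 2) (Fin 2) ℝ) κ := by
  intro h
  unfold DAWTYes CanHost IsAdjMatrix at h
  obtain ⟨B, C, ⟨hBr, hBc⟩, hCle, hsum, S, f, hlen, hf0, hflow, hcap⟩ := h
  -- matrix entry bounds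
  have hM00 : C 0 0 ≤ 5/9 := by
    have := (hCle 0 0).2
    norm_num [Matrix.cons_val_zero, Matrix.cons_val_one, Matrix.head_cons] at this
    exact this
  have hM01 : C 0 1 ≤ 4/9 := by
    have := (hCle 0 1).2
    norm_num [Matrix.cons_val_zero, Matrix.cons_val_one, Matrix.head_cons] at this
    exact this
  have hM10 : C 1 0 ≤ 4/9 := by
    have := (hCle 1 0).2
    norm_num [Matrix.cons_val_zero, Matrix.cons_val_one, Matrix.head_cons] at this
    exact this
  have hM11 : C 1 1 ≤ 5/9 := by
    have := (hCle 1 1).2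
    norm_num [Matrix.cons_val_zero, Matrix.cons_val_one, Matrix.head_cons] at this
    exact this
  have hC01nn : 0 ≤ C 0 1 := (hCle 0 1).1
  have hC10nn : 0 ≤ C 1 0 := (hCle 1 0).1
  -- adjacency matrix arithmetic
  have e1 : B 0 0 + B 0 1 = 3 := by
    have := hBr 0; rw [Fin.sum_univ_two] at this; omega
  have e2 : B 1 0 + B 1 1 = 3 := by
    have := hBr 1; rw [Fin.sum_univ_two] at this; omega
  have e3 : B 0 0 + B 1 0 = 3 := by
    have := hBc 0; rw [Fin.sum_univ_two] at this; omega
  -- flow equalities with coefficient 3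
  have hF : ∀ u v : Fin 2,
      (∑ P ∈ S, if P.head? = some u ∧ P.getLast? = some v then f P else 0) = 3 * C u v := by
    intro u v
    have := hflow u v
    norm_num at this
    exact this
  -- total demand
  have hsum' : κ * 2 ≤ C 0 0 + C 0 1 + C 1 0 + C 1 1 := by
    simp only [Fin.sum_univ_two] at hsum
    push_cast at hsum
    linarith
  -- the four walk classes
  set x := ∑ P ∈ S, if (P.head? = some 0 ∧ P.getLast? = some 0) ∧ arcCount P 0 1 = 0
    then f P else 0 with hxdef
  set y := ∑ P ∈ S, if (P.head? = some 0 ∧ P.getLast? = some 0) ∧ ¬ arcCount P 0 1 = 0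
    then f P else 0 with hydef
  set x' := ∑ P ∈ S, if (P.head? = some 1 ∧ P.getLast? = some 1) ∧ arcCount P 1 0 = 0
    then f P else 0 with hx'def
  set y' := ∑ P ∈ S, if (P.head? = some 1 ∧ P.getLast? = some 1) ∧ ¬ arcCount P 1 0 = 0
    then f P else 0 with hy'def
  have hynn : 0 ≤ y := sum_ite_nonneg' S f hf0 _
  have hy'nn : 0 ≤ y' := sum_ite_nonneg' S f hf0 _
  have s0 : x + y = 3 * C 0 0 := by
    rw [hxdef, hydef, sum_ite_split' S f
      (fun P => P.head? = some 0 ∧ P.getLast? = some 0) (fun P => arcCount P 0 1 = 0)]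
    exact hF 0 0
  have s1 : x' + y' = 3 * C 1 1 := by
    rw [hx'def, hy'def, sum_ite_split' S f
      (fun P => P.head? = some 1 ∧ P.getLast? = some 1) (fun P => arcCount P 1 0 = 0)]
    exact hF 1 1
  -- x ≤ B 0 0
  have hxB : x ≤ (B 0 0 : ℝ) := by
    rw [hxdef]
    refine le_trans (Finset.sum_le_sum fun P hP => ?_) (hcap 0 0)
    by_cases h : (P.head? = some 0 ∧ P.getLast? = some 0) ∧ arcCount P 0 1 = 0
    · rw [if_pos h]
      have h1 : 1 ≤ arcCount P 0 0 := loop0' P (hlen P hP) h.1.1 h.2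
      have h1' : (1:ℝ) ≤ (arcCount P 0 0 : ℝ) := by exact_mod_cast h1
      nlinarith [hf0 P hP]
    · rw [if_neg h]
      exact mul_nonneg (hf0 P hP) (by positivity)
  -- x' ≤ B 1 1
  have hx'B : x' ≤ (B 1 1 : ℝ) := by
    rw [hx'def]
    refine le_trans (Finset.sum_le_sum fun P hP => ?_) (hcap 1 1)
    by_cases h : (P.head? = some 1 ∧ P.getLast? = some 1) ∧ arcCount P 1 0 = 0
    · rw [if_pos h]
      have h1 : 1 ≤ arcCount P 1 1 := loop1' P (hlen P hP) h.1.1 h.2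
      have h1' : (1:ℝ) ≤ (arcCount P 1 1 : ℝ) := by exact_mod_cast h1
      nlinarith [hf0 P hP]
    · rw [if_neg h]
      exact mul_nonneg (hf0 P hP) (by positivity)
  -- y + y' + 3 * C 0 1 ≤ B 0 1
  have h01 : y + y' + 3 * C 0 1 ≤ (B 0 1 : ℝ) := by
    rw [← hF 0 1, hydef, hy'def, ← Finset.sum_add_distrib, ← Finset.sum_add_distrib]
    refine le_trans (Finset.sum_le_sum fun P hP => ?_) (hcap 0 1)
    refine ite3_le' _ _ _ (f P) _ (hf0 P hP) (by positivity) ?_ ?_ ?_ ?_ ?_ ?_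
    · intro hA hB
      have := hA.1.1.symm.trans hB.1.1
      simp at this
    · intro hA hB
      have := hA.1.2.symm.trans hB.2
      simp at this
    · intro hA hB
      have := hA.1.1.symm.trans hB.1
      simp at this
    · intro hA
      have : 1 ≤ arcCount P 0 1 := Nat.one_le_iff_ne_zero.mpr hA.2
      exact_mod_cast this
    · intro hA
      have heq := crosseq' P 1 hA.1.1 hA.1.2
      have : 1 ≤ arcCount P 0 1 := by
        have := Nat.one_le_iff_ne_zero.mpr hA.2
        omega
      exact_mod_cast this
    · intro hA
      have : 1 ≤ arcCount P 0 1 := cross01' P hA.1 hA.2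
      exact_mod_cast this
  -- y + y' + 3 * C 1 0 ≤ B 1 0
  have h10 : y + y' + 3 * C 1 0 ≤ (B 1 0 : ℝ) := by
    rw [← hF 1 0, hydef, hy'def, ← Finset.sum_add_distrib, ← Finset.sum_add_distrib]
    refine le_trans (Finset.sum_le_sum fun P hP => ?_) (hcap 1 0)
    refine ite3_le' _ _ _ (f P) _ (hf0 P hP) (by positivity) ?_ ?_ ?_ ?_ ?_ ?_
    · intro hA hB
      have := hA.1.1.symm.trans hB.1.1
      simp at this
    · intro hA hB
      have := hA.1.1.symm.trans hB.1
      simp at this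
    · intro hA hB
      have := hA.1.2.symm.trans hB.2
      simp at this
    · intro hA
      have heq := crosseq' P 0 hA.1.1 hA.1.2
      have : 1 ≤ arcCount P 1 0 := by
        have := Nat.one_le_iff_ne_zero.mpr hA.2
        omega
      exact_mod_cast this
    · intro hA
      have : 1 ≤ arcCount P 1 0 := Nat.one_le_iff_ne_zero.mpr hA.2
      exact_mod_cast this
    · intro hA
      have : 1 ≤ arcCount P 1 0 := cross10' P hA.1 hA.2
      exact_mod_cast this
  -- case analysis on B 0 0
  rcases Nat.lt_or_ge (B 0 0) 2 with hA | hA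
  · -- B 0 0 ≤ 1
    have r00 : (B 0 0 : ℝ) ≤ 1 := by exact_mod_cast Nat.lt_succ_iff.mp hA
    have r11 : (B 1 1 : ℝ) = (B 0 0 : ℝ) := by
      have : B 1 1 = B 0 0 := by omega
      exact_mod_cast this
    have r01 : (B 0 1 : ℝ) = 3 - (B 0 0 : ℝ) := by
      have : (B 0 0 : ℝ) + (B 0 1 : ℝ) = 3 := by exact_mod_cast e1
      linarith
    linarith
  · -- B 0 0 ≥ 2
    have hb01 : B 0 1 ≤ 1 := by omega
    have hb10 : B 1 0 ≤ 1 := by omega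
    have r01 : (B 0 1 : ℝ) ≤ 1 := by exact_mod_cast hb01
    have r10 : (B 1 0 : ℝ) ≤ 1 := by exact_mod_cast hb10
    linarith
end

section
/- Let n be an even positive integer and let M_n = (a_{i,j}) be the n×n matrix with a_{i,j} = (1/(2n−1))·m_{i,j}, where m_{i,j} = 5/2 if i ≠ j and i ≡ j (mod 2), m_{i,j} = 3/2 if i ≢ j (mod 2), and m_{i,i} = 3/2 for all i. Then M_n is doubly stochastic, and for every n×n matrix B of nonnegative integers with all row and column sums equal to 2n−1 and every n×n matrix C with 0 ≤ C_{u,v} ≤ (M_n)_{u,v} and (2n−1)·C_{u,v} ≤ B_{u,v} for all u,v, it holds that Σ_{u,v} C_{u,v} ≤ n·(7n−4)/(8n−4); hence (M_n,κ) is a no-instance of DEMAND-AWARE WEAK DIRECT THROUGHPUT for every κ > (7n−4)/(8n−4). -/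
open Finset

/-- the unnormalized demand value -/
private noncomputable def mval {n : ℕ} (i j : Fin n) : ℝ :=
  if i = j then 3 / 2
    else if ((i : ℕ) + 1) % 2 = ((j : ℕ) + 1) % 2 then 5 / 2 else 3 / 2

private lemma parity_sum (k r : ℕ) :
    ∑ j ∈ Finset.range (k + k), (if (r + 1) % 2 = (j + 1) % 2 then (1:ℝ) else 0)
      = k := by
  induction k with
  | zero => simp
  | succ k ih =>
    have h : k + 1 + (k + 1) = (k + k) + 1 + 1 := by omega
    rw [h, Finset.sum_range_succ, Finset.sum_range_succ, ih]
    have h1 : (k + k + 1) % 2 = 1 := by omega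
    have h2 : (k + k + 1 + 1) % 2 = 0 := by omega
    rcases Nat.mod_two_eq_zero_or_one (r + 1) with h0 | h0 <;>
      rw [h0, h1, h2] <;> norm_num

private lemma mval_pointwise {n : ℕ} (i j : Fin n) :
    mval i j = 3 / 2
      + (if ((i : ℕ) + 1) % 2 = ((j : ℕ) + 1) % 2 then (1:ℝ) else 0)
      - (if (i : ℕ) = (j : ℕ) then (1:ℝ) else 0) := by
  by_cases h : i = j
  · subst h; simp [mval]
  · have h' : (i : ℕ) ≠ (j : ℕ) := fun hh => h (Fin.ext hh)
    simp only [mval, if_neg h, if_neg h']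
    split_ifs <;> norm_num

private lemma mval_row {k : ℕ} (i : Fin (k + k)) :
    ∑ j, mval i j = 2 * ((k : ℝ) + k) - 1 := by
  have h1 : ∑ j : Fin (k + k),
      (if ((i : ℕ) + 1) % 2 = ((j : ℕ) + 1) % 2 then (1:ℝ) else 0) = k := by
    rw [Fin.sum_univ_eq_sum_range (fun s => if ((i : ℕ) + 1) % 2 = (s + 1) % 2
      then (1:ℝ) else 0)]
    exact parity_sum k (i : ℕ)
  have h2 : ∑ j : Fin (k + k),
      (if (i : ℕ) = (j : ℕ) then (1:ℝ) else 0) = 1 := by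
    have : ∀ j : Fin (k + k), (if (i : ℕ) = (j : ℕ) then (1:ℝ) else 0)
        = if i = j then (1:ℝ) else 0 := by
      intro j; simp [Fin.ext_iff]
    rw [Finset.sum_congr rfl fun j _ => this j]
    simp
  have hk1 : 1 ≤ k := by
    rcases Nat.eq_zero_or_pos k with h | h
    · subst h; exact absurd i.isLt (by omega)
    · exact h
  calc ∑ j, mval i j
      = ∑ j : Fin (k + k), (3 / 2
        + (if ((i : ℕ) + 1) % 2 = ((j : ℕ) + 1) % 2 then (1:ℝ) else 0)
        - (if (i : ℕ) = (j : ℕ) then (1:ℝ) else 0)) :=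
        Finset.sum_congr rfl fun j _ => mval_pointwise i j
    _ = (∑ _j : Fin (k + k), (3/2 : ℝ))
        + (∑ j : Fin (k + k), (if ((i : ℕ) + 1) % 2 = ((j : ℕ) + 1) % 2
            then (1:ℝ) else 0))
        - (∑ j : Fin (k + k), (if (i : ℕ) = (j : ℕ) then (1:ℝ) else 0)) := by
        rw [Finset.sum_sub_distrib, Finset.sum_add_distrib]
    _ = 2 * ((k : ℝ) + k) - 1 := by
        rw [h1, h2, Finset.sum_const, Finset.card_univ, Fintype.card_fin,
          nsmul_eq_mul]
        push_cast
        ring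

private lemma mval_row' {n : ℕ} (hne : Even n) (i : Fin n) :
    ∑ j, mval i j = 2 * (n : ℝ) - 1 := by
  obtain ⟨k, rfl⟩ := hne
  rw [mval_row i]
  push_cast
  ring

private lemma mval_symm {n : ℕ} (i j : Fin n) : mval i j = mval j i := by
  unfold mval
  by_cases h : i = j
  · subst h; rfl
  · rw [if_neg h, if_neg (Ne.symm h)]
    by_cases hp : ((i : ℕ) + 1) % 2 = ((j : ℕ) + 1) % 2
    · rw [if_pos hp, if_pos hp.symm]
    · rw [if_neg hp, if_neg (fun hh => hp hh.symm)]

private lemma min_bound (b : ℕ) (x mv : ℝ) (hmv : mv = 3/2 ∨ mv = 5/2)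
    (h1 : x ≤ (b : ℝ)) (h2 : x ≤ mv) : x ≤ (b : ℝ) / 2 + mv / 2 - 1 / 4 := by
  match b with
  | 0 => rcases hmv with h | h <;> (norm_num at h1 ⊢; linarith)
  | 1 => rcases hmv with h | h <;> (norm_num at h1 ⊢; linarith)
  | 2 => rcases hmv with h | h <;> (norm_num at h1 ⊢; linarith)
  | (b + 3) =>
    have hb : (3 : ℝ) ≤ ((b + 3 : ℕ) : ℝ) := by
      have : (0:ℝ) ≤ (b : ℝ) := Nat.cast_nonneg b
      push_cast; linarith
    rcases hmv with h | h <;> linarith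

/-- upper bound for DEMAND-AWARE WEAK DIRECT THROUGHPUT for even `n`.
Indices are 1-based in the paper; here `i : Fin n` corresponds to the 1-based index `i+1`. -/
theorem weak_direct_throughput_upper_bound_even (n : ℕ) (hn : 0 < n) (hne : Even n)
    (M : Matrix (Fin n) (Fin n) ℝ)
    (hM : ∀ i j, M i j = (1 / (2 * (n : ℝ) - 1)) *
      (if i = j then 3 / 2
        else if ((i : ℕ) + 1) % 2 = ((j : ℕ) + 1) % 2 then 5 / 2 else 3 / 2)) :
    DoublyStochastic M ∧
    (∀ (B : Matrix (Fin n) (Fin n) ℕ) (C : Matrix (Fin n) (Fin n) ℝ),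
      IsAdjMatrix B →
      (∀ u v, 0 ≤ C u v ∧ C u v ≤ M u v) →
      (∀ u v, (2 * (n : ℝ) - 1) * C u v ≤ (B u v : ℝ)) →
      (∑ u, ∑ v, C u v) ≤ (n : ℝ) * ((7 * (n : ℝ) - 4) / (8 * (n : ℝ) - 4))) ∧
    (∀ κ : ℝ, (7 * (n : ℝ) - 4) / (8 * (n : ℝ) - 4) < κ → ¬ DAWDTYes M κ) := by
  have hn1 : 1 ≤ n := hn
  have hnR : (1 : ℝ) ≤ (n : ℝ) := by exact_mod_cast hn1
  have hNpos : (0 : ℝ) < 2 * (n : ℝ) - 1 := by linarith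
  have hN0 : (2 * (n : ℝ) - 1) ≠ 0 := ne_of_gt hNpos
  -- identify M with mval / (2n-1)
  have hMm : ∀ i j : Fin n, M i j = (1 / (2 * (n : ℝ) - 1)) * mval i j := by
    intro i j; rw [hM i j]; rfl
  have hmval_cases : ∀ i j : Fin n, mval i j = 3/2 ∨ mval i j = 5/2 := by
    intro i j; unfold mval; split_ifs
    · exact Or.inl rfl
    · exact Or.inr rfl
    · exact Or.inl rfl
  have hmval_nonneg : ∀ i j : Fin n, (0:ℝ) ≤ mval i j := by
    intro i j; rcases hmval_cases i j with h | h <;> rw [h] <;> norm_num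
  have hrow : ∀ i : Fin n, ∑ j, mval i j = 2 * (n : ℝ) - 1 :=
    fun i => mval_row' hne i
  have hcol : ∀ j : Fin n, ∑ i, mval i j = 2 * (n : ℝ) - 1 := by
    intro j
    rw [Finset.sum_congr rfl fun i _ => mval_symm i j]
    exact hrow j
  have hmul : ∀ i j : Fin n, (2 * (n : ℝ) - 1) * M i j = mval i j := by
    intro i j
    rw [hMm i j, ← mul_assoc, mul_one_div, div_self hN0, one_mul]
  -- Part 1: doubly stochastic
  have hDS : DoublyStochastic M := by
    refine ⟨fun i j => ?_, fun i => ?_, fun j => ?_⟩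
    · rw [hMm i j]
      apply mul_nonneg (by positivity) (hmval_nonneg i j)
    · rw [Finset.sum_congr rfl fun j _ => hMm i j, ← Finset.mul_sum, hrow i]
      field_simp
    · rw [Finset.sum_congr rfl fun i _ => hMm i j, ← Finset.mul_sum, hcol j]
      field_simp
  -- Part 2: the sum bound
  have hPart2 : ∀ (B : Matrix (Fin n) (Fin n) ℕ) (C : Matrix (Fin n) (Fin n) ℝ),
      IsAdjMatrix B →
      (∀ u v, 0 ≤ C u v ∧ C u v ≤ M u v) →
      (∀ u v, (2 * (n : ℝ) - 1) * C u v ≤ (B u v : ℝ)) →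
      (∑ u, ∑ v, C u v) ≤ (n : ℝ) * ((7 * (n : ℝ) - 4) / (8 * (n : ℝ) - 4)) := by
    intro B C hB hC hBC
    have hBrowR : ∀ u : Fin n, ∑ v, ((B u v : ℕ) : ℝ) = 2 * (n : ℝ) - 1 := by
      intro u
      rw [← Nat.cast_sum, hB.1 u]
      have h2n : 1 ≤ 2 * n := by omega
      push_cast [Nat.cast_sub h2n]
      ring
    have key : ∀ u v : Fin n, (2 * (n : ℝ) - 1) * C u v
        ≤ (B u v : ℝ) / 2 + mval u v / 2 - 1 / 4 := by
      intro u v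
      apply min_bound (B u v) _ _ (hmval_cases u v) (hBC u v)
      rw [← hmul u v]
      exact mul_le_mul_of_nonneg_left (hC u v).2 (le_of_lt hNpos)
    have hsum : (2 * (n : ℝ) - 1) * (∑ u, ∑ v, C u v)
        ≤ (n : ℝ) * ((7 * (n : ℝ) - 4) / 4) := by
      have step1 : (2 * (n : ℝ) - 1) * (∑ u, ∑ v, C u v)
          = ∑ u, ∑ v, (2 * (n : ℝ) - 1) * C u v := by
        rw [Finset.mul_sum]
        exact Finset.sum_congr rfl fun u _ => Finset.mul_sum _ _ _
      rw [step1]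
      have step2 : ∀ u : Fin n, ∑ v, ((B u v : ℝ) / 2 + mval u v / 2 - 1 / 4)
          = (7 * (n : ℝ) - 4) / 4 := by
        intro u
        rw [Finset.sum_sub_distrib, Finset.sum_add_distrib, ← Finset.sum_div,
          ← Finset.sum_div, hBrowR u, hrow u, Finset.sum_const,
          Finset.card_univ, Fintype.card_fin, nsmul_eq_mul]
        ring
      calc ∑ u, ∑ v, (2 * (n : ℝ) - 1) * C u v
          ≤ ∑ u : Fin n, ∑ v, ((B u v : ℝ) / 2 + mval u v / 2 - 1 / 4) :=
            Finset.sum_le_sum fun u _ => Finset.sum_le_sum fun v _ => key u v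
        _ = ∑ _u : Fin n, (7 * (n : ℝ) - 4) / 4 :=
            Finset.sum_congr rfl fun u _ => step2 u
        _ = (n : ℝ) * ((7 * (n : ℝ) - 4) / 4) := by
            rw [Finset.sum_const, Finset.card_univ, Fintype.card_fin, nsmul_eq_mul]
    have h8 : (8 * (n : ℝ) - 4) = 4 * (2 * (n : ℝ) - 1) := by ring
    rw [h8, show (n : ℝ) * ((7 * (n : ℝ) - 4) / (4 * (2 * (n : ℝ) - 1)))
      = ((n : ℝ) * (7 * (n : ℝ) - 4)) / (4 * (2 * (n : ℝ) - 1)) from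
        (mul_div_assoc _ _ _).symm, le_div_iff₀ (by linarith)]
    nlinarith [hsum]
  refine ⟨hDS, hPart2, ?_⟩
  -- Part 3
  intro κ hκ hyes
  obtain ⟨B, C, hB, hC, hκn, hBC⟩ := hyes
  have hb := hPart2 B C hB hC hBC
  have hnpos : (0 : ℝ) < n := by linarith
  have : (n : ℝ) * ((7 * (n : ℝ) - 4) / (8 * (n : ℝ) - 4)) < (n : ℝ) * κ :=
    mul_lt_mul_of_pos_left hκ hnpos
  linarith [hκn, hb]
end

section
/- Let n be an odd positive integer and let M_n = (a_{i,j}) be the n×n matrix with a_{i,j} = (1/(2n−1))·m_{i,j}, where m_{i,j} = 5/2 if i ≠ j and i ≡ j (mod 2), m_{i,j} = 3/2 if i ≢ j (mod 2), m_{i,i} = 1 if i is odd, and m_{i,i} = 2 if i is even. Then M_n is doubly stochastic, and for every n×n matrix B of nonnegative integers with all row and column sums equal to 2n−1 and every n×n matrix C with 0 ≤ C_{u,v} ≤ (M_n)_{u,v} and (2n−1)·C_{u,v} ≤ B_{u,v} for all u,v, it holds that Σ_{u,v} C_{u,v} ≤ n·(7n−3)/(8n−4); hence (M_n,κ) is a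 no-instance of DEMAND-AWARE WEAK DIRECT THROUGHPUT for every κ > (7n−3)/(8n−4). -/
open Finset

noncomputable def gmat (n : ℕ) (i j : Fin n) : ℝ :=
  if i = j then (if ((i : ℕ) + 1) % 2 = 1 then 1 else 2)
  else if ((i : ℕ) + 1) % 2 = ((j : ℕ) + 1) % 2 then 5 / 2 else 3 / 2

lemma parity_count (k : ℕ) :
    ∑ j ∈ Finset.range (2 * k + 1), (if (j + 1) % 2 = 1 then (1:ℝ) else 0) = k + 1 := by
  induction k with
  | zero => rw [show 2 * 0 + 1 = 1 from rfl, Finset.sum_range_one]; norm_num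
  | succ m ih =>
    have h1 : 2 * (m + 1) + 1 = (2 * m + 1) + 1 + 1 := by ring
    rw [h1, Finset.sum_range_succ, Finset.sum_range_succ, ih]
    have h2 : ((2 * m + 1) + 1) % 2 = 0 := by omega
    have h3 : ((2 * m + 1 + 1) + 1) % 2 = 1 := by omega
    rw [h2, h3]
    norm_num

lemma parity_count_fin (n k : ℕ) (hk : n = 2 * k + 1) :
    ∑ j : Fin n, (if ((j : ℕ) + 1) % 2 = 1 then (1:ℝ) else 0) = k + 1 := by
  rw [Fin.sum_univ_eq_sum_range (fun j => if (j + 1) % 2 = 1 then (1:ℝ) else 0) n, hk]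
  exact parity_count k

lemma gmat_rowsum (n k : ℕ) (hk : n = 2 * k + 1) (i : Fin n) :
    ∑ j, gmat n i j = 2 * (n : ℝ) - 1 := by
  have hpt : ∀ j : Fin n, gmat n i j =
      (3/2 + (if ((i : ℕ) + 1) % 2 = ((j : ℕ) + 1) % 2 then (1:ℝ) else 0)) +
      (if i = j then (if ((i : ℕ) + 1) % 2 = 1 then (1:ℝ) else 2) - 5/2 else 0) := by
    intro j
    unfold gmat
    by_cases h : i = j
    · subst h; simp; ring
    · by_cases hp : ((i : ℕ) + 1) % 2 = ((j : ℕ) + 1) % 2 <;> simp [h, hp] <;> norm_num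
  rw [Finset.sum_congr rfl (fun j _ => hpt j), Finset.sum_add_distrib, Finset.sum_add_distrib,
    Finset.sum_ite_eq, if_pos (Finset.mem_univ i), Finset.sum_const, Finset.card_univ,
    Fintype.card_fin, nsmul_eq_mul]
  rcases Nat.mod_two_eq_zero_or_one ((i : ℕ) + 1) with hi | hi
  · have hcond : ∀ j : Fin n, (if ((i : ℕ) + 1) % 2 = ((j : ℕ) + 1) % 2 then (1:ℝ) else 0)
        = 1 - (if ((j : ℕ) + 1) % 2 = 1 then (1:ℝ) else 0) := by
      intro j
      rcases Nat.mod_two_eq_zero_or_one ((j : ℕ) + 1) with hj | hj <;> rw [hi, hj] <;> norm_num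
    rw [Finset.sum_congr rfl (fun j _ => hcond j), Finset.sum_sub_distrib,
      parity_count_fin n k hk, Finset.sum_const, Finset.card_univ, Fintype.card_fin,
      nsmul_eq_mul, hi]
    norm_num
    subst hk; push_cast; ring
  · have hcond : ∀ j : Fin n, (if ((i : ℕ) + 1) % 2 = ((j : ℕ) + 1) % 2 then (1:ℝ) else 0)
        = (if ((j : ℕ) + 1) % 2 = 1 then (1:ℝ) else 0) := by
      intro j
      rcases Nat.mod_two_eq_zero_or_one ((j : ℕ) + 1) with hj | hj <;> rw [hi, hj] <;> norm_num
    rw [Finset.sum_congr rfl (fun j _ => hcond j), parity_count_fin n k hk, hi]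
    norm_num
    subst hk; push_cast; ring

lemma gmat_symm (n : ℕ) (i j : Fin n) : gmat n i j = gmat n j i := by
  unfold gmat
  by_cases h : i = j
  · subst h; rfl
  · have h' : ¬ j = i := fun hh => h hh.symm
    rw [if_neg h, if_neg h']
    by_cases hp : ((i : ℕ) + 1) % 2 = ((j : ℕ) + 1) % 2
    · rw [if_pos hp, if_pos hp.symm]
    · rw [if_neg hp, if_neg (fun hh => hp hh.symm)]

lemma gmat_nonneg (n : ℕ) (i j : Fin n) : 0 ≤ gmat n i j := by
  unfold gmat; split_ifs <;> norm_num

lemma gmat_offdiag (n : ℕ) (i j : Fin n) (h : i ≠ j) :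
    gmat n i j = 5/2 ∨ gmat n i j = 3/2 := by
  unfold gmat; rw [if_neg h]; split_ifs <;> simp

lemma key_offdiag (b : ℕ) (x g : ℝ) (hg : g = 5/2 ∨ g = 3/2)
    (h1 : x ≤ g) (h2 : x ≤ (b : ℝ)) : x ≤ (g + (b : ℝ)) / 2 - 1/4 := by
  rcases hg with hg | hg <;> subst hg
  · rcases le_or_gt b 2 with hb | hb
    · have : (b : ℝ) ≤ 2 := by exact_mod_cast hb
      linarith
    · have : (3 : ℝ) ≤ (b : ℝ) := by exact_mod_cast hb
      linarith
  · rcases le_or_gt b 1 with hb | hb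
    · have : (b : ℝ) ≤ 1 := by exact_mod_cast hb
      linarith
    · have : (2 : ℝ) ≤ (b : ℝ) := by exact_mod_cast hb
      linarith
/-- upper bound for DEMAND-AWARE WEAK DIRECT THROUGHPUT for odd `n`.
Indices are 1-based in the paper; here `i : Fin n` corresponds to the 1-based index `i+1`. -/
theorem weak_direct_throughput_upper_bound_odd (n : ℕ) (hn : 0 < n) (hno : Odd n)
    (M : Matrix (Fin n) (Fin n) ℝ)
    (hM : ∀ i j, M i j = (1 / (2 * (n : ℝ) - 1)) *
      (if i = j then (if ((i : ℕ) + 1) % 2 = 1 then 1 else 2)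
        else if ((i : ℕ) + 1) % 2 = ((j : ℕ) + 1) % 2 then 5 / 2 else 3 / 2)) :
    DoublyStochastic M ∧
    (∀ (B : Matrix (Fin n) (Fin n) ℕ) (C : Matrix (Fin n) (Fin n) ℝ),
      IsAdjMatrix B →
      (∀ u v, 0 ≤ C u v ∧ C u v ≤ M u v) →
      (∀ u v, (2 * (n : ℝ) - 1) * C u v ≤ (B u v : ℝ)) →
      (∑ u, ∑ v, C u v) ≤ (n : ℝ) * ((7 * (n : ℝ) - 3) / (8 * (n : ℝ) - 4))) ∧
    (∀ κ : ℝ, (7 * (n : ℝ) - 3) / (8 * (n : ℝ) - 4) < κ → ¬ DAWDTYes M κ) := by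
  obtain ⟨k, hk⟩ := hno
  have hk' : n = 2 * k + 1 := by omega
  have hMg : ∀ i j, M i j = (1 / (2 * (n : ℝ) - 1)) * gmat n i j := by
    intro i j; rw [hM i j]; rfl
  have hn1 : (1 : ℝ) ≤ (n : ℝ) := by exact_mod_cast hn
  have hT : (0 : ℝ) < 2 * (n : ℝ) - 1 := by linarith
  have hT' : (2 * (n : ℝ) - 1) ≠ 0 := ne_of_gt hT
  have hrow : ∀ i : Fin n, ∑ j, M i j = 1 := by
    intro i
    rw [Finset.sum_congr rfl (fun j _ => hMg i j), ← Finset.mul_sum,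
      gmat_rowsum n k hk' i]
    field_simp
  have hcol : ∀ j : Fin n, ∑ i, M i j = 1 := by
    intro j
    have : ∀ i : Fin n, M i j = M j i := by
      intro i; rw [hMg, hMg, gmat_symm]
    rw [Finset.sum_congr rfl (fun i _ => this i)]
    exact hrow j
  have part2 : ∀ (B : Matrix (Fin n) (Fin n) ℕ) (C : Matrix (Fin n) (Fin n) ℝ),
      IsAdjMatrix B →
      (∀ u v, 0 ≤ C u v ∧ C u v ≤ M u v) →
      (∀ u v, (2 * (n : ℝ) - 1) * C u v ≤ (B u v : ℝ)) →
      (∑ u, ∑ v, C u v) ≤ (n : ℝ) * ((7 * (n : ℝ) - 3) / (8 * (n : ℝ) - 4)) := by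
    intro B C hB hC hdir
    have hTC : ∀ u v : Fin n, (2 * (n : ℝ) - 1) * C u v ≤
        (gmat n u v + (B u v : ℝ)) / 2 - (if u = v then 0 else 1/4) := by
      intro u v
      have hCg : (2 * (n : ℝ) - 1) * C u v ≤ gmat n u v := by
        have := (hC u v).2
        rw [hMg u v] at this
        calc (2 * (n : ℝ) - 1) * C u v
            ≤ (2 * (n : ℝ) - 1) * ((1 / (2 * (n : ℝ) - 1)) * gmat n u v) :=
              mul_le_mul_of_nonneg_left this (le_of_lt hT)
          _ = gmat n u v := by field_simp
      by_cases huv : u = v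
      · rw [if_pos huv]
        have := hdir u v
        linarith
      · rw [if_neg huv]
        exact key_offdiag (B u v) _ _ (gmat_offdiag n u v huv) hCg (hdir u v)
    have hBrow : ∀ u : Fin n, ∑ v, (B u v : ℝ) = 2 * (n : ℝ) - 1 := by
      intro u
      have h := hB.1 u
      have : ((∑ v, B u v : ℕ) : ℝ) = ((2 * n - 1 : ℕ) : ℝ) := by rw [h]
      rw [Nat.cast_sum] at this
      rw [this, Nat.cast_sub (by omega)]
      push_cast; ring
    have hgrow : ∀ u : Fin n, ∑ v, gmat n u v = 2 * (n : ℝ) - 1 :=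
      fun u => gmat_rowsum n k hk' u
    have hiter : ∀ u : Fin n, ∑ v, (if u = v then (0:ℝ) else 1/4) = (n : ℝ)/4 - 1/4 := by
      intro u
      have : ∀ v : Fin n, (if u = v then (0:ℝ) else 1/4) = 1/4 - (if u = v then (1:ℝ)/4 else 0) := by
        intro v; by_cases h : u = v <;> simp [h]
      rw [Finset.sum_congr rfl (fun v _ => this v), Finset.sum_sub_distrib,
        Finset.sum_ite_eq, if_pos (Finset.mem_univ u), Finset.sum_const, Finset.card_univ,
        Fintype.card_fin, nsmul_eq_mul]
      ring
    have hmain : ∑ u, ∑ v, (2 * (n : ℝ) - 1) * C u v ≤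
        (n : ℝ) * ((2 * (n : ℝ) - 1) - ((n : ℝ)/4 - 1/4)) := by
      calc ∑ u, ∑ v, (2 * (n : ℝ) - 1) * C u v
          ≤ ∑ u : Fin n, ((2 * (n : ℝ) - 1) - ((n : ℝ)/4 - 1/4)) := by
            apply Finset.sum_le_sum
            intro u _
            calc ∑ v, (2 * (n : ℝ) - 1) * C u v
                ≤ ∑ v, ((gmat n u v + (B u v : ℝ)) / 2 - (if u = v then 0 else 1/4)) :=
                  Finset.sum_le_sum (fun v _ => hTC u v)
              _ = (∑ v, gmat n u v + ∑ v, (B u v : ℝ)) / 2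
                    - ∑ v, (if u = v then (0:ℝ) else 1/4) := by
                  rw [Finset.sum_sub_distrib, ← Finset.sum_div, Finset.sum_add_distrib]
              _ = (2 * (n : ℝ) - 1) - ((n : ℝ)/4 - 1/4) := by
                  rw [hgrow u, hBrow u, hiter u]; ring
        _ = (n : ℝ) * ((2 * (n : ℝ) - 1) - ((n : ℝ)/4 - 1/4)) := by
            rw [Finset.sum_const, Finset.card_univ, Fintype.card_fin, nsmul_eq_mul]
    have hfact : ∑ u, ∑ v, (2 * (n : ℝ) - 1) * C u v
        = (2 * (n : ℝ) - 1) * ∑ u, ∑ v, C u v := by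
      simp only [← Finset.mul_sum]
    rw [hfact] at hmain
    set x : ℝ := (n : ℝ) with hx
    set S : ℝ := ∑ u, ∑ v, C u v with hS
    have h8 : (0 : ℝ) < 8 * x - 4 := by linarith
    rw [mul_div_assoc'] at *
    rw [le_div_iff₀ h8]
    nlinarith [hmain]
  refine ⟨⟨?_, hrow, hcol⟩, part2, ?_⟩
  · intro i j
    rw [hMg i j]
    have h1 : (0:ℝ) ≤ 1 / (2 * (n : ℝ) - 1) := by positivity
    exact mul_nonneg h1 (gmat_nonneg n i j)
  · rintro κ hκ ⟨B, C, hB, hC, hsum, hdir⟩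
    have h2 := part2 B C hB hC hdir
    have hnpos : (0 : ℝ) < (n : ℝ) := by exact_mod_cast hn
    have : (n : ℝ) * ((7 * (n : ℝ) - 3) / (8 * (n : ℝ) - 4)) < (n : ℝ) * κ :=
      mul_lt_mul_of_pos_left hκ hnpos
    linarith [hsum]
end

section
/- For every positive integer n, every doubly stochastic n×n matrix M, and every real number κ with 0 ≤ κ ≤ n/(2n−1), the pair (M,κ) is a yes-instance of DEMAND-AWARE THROUGHPUT; that is, there exists an n×n matrix B of nonnegative integers with all row and column sums equal to 2n−1 such that B can host κ·M. -/
open Finset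

private noncomputable def walkW {n : ℕ} (d : Fin n → Fin n → ℝ) : List (Fin n) → ℝ
  | [a, b] => if a = b then d a b / n else 2 * d a b / n
  | [a, w, b] => if w = a ∨ w = b then 0 else d a b / n
  | _ => 0

private lemma walkW_nonneg {n : ℕ} (d : Fin n → Fin n → ℝ) (hd0 : ∀ u v, 0 ≤ d u v)
    (P : List (Fin n)) : 0 ≤ walkW d P := by
  have hN : (0:ℝ) ≤ n := Nat.cast_nonneg n
  match P with
  | [] => simp [walkW]
  | [a] => simp [walkW]
  | [a, b] =>
    simp only [walkW]
    split_ifs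
    · exact div_nonneg (hd0 a b) hN
    · have := hd0 a b; positivity
  | [a, w, b] =>
    simp only [walkW]
    split_ifs
    · exact le_rfl
    · exact div_nonneg (hd0 a b) hN
  | a :: b :: c :: e :: l => simp [walkW]

private lemma walkW_total {n : ℕ} (hn : 0 < n) (d : Fin n → Fin n → ℝ) (u v : Fin n) :
    walkW d [u,v] + ∑ w, walkW d [u,w,v] = d u v := by
  have hN : (0:ℝ) < n := by exact_mod_cast hn
  by_cases huv : u = v
  · subst huv
    have h1 : ∀ w : Fin n, walkW d [u,w,u] = d u u / n - (if w = u then d u u / n else 0) := by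
      intro w
      by_cases h : w = u <;> simp [walkW, h]
    simp only [h1, Finset.sum_sub_distrib, Finset.sum_const, Finset.sum_ite_eq',
      Finset.mem_univ, if_true, Finset.card_univ, Fintype.card_fin]
    simp only [walkW, if_pos rfl, if_true, nsmul_eq_mul]
    field_simp
    ring
  · have h1 : ∀ w : Fin n, walkW d [u,w,v] =
        d u v / n - (if w = u then d u v / n else 0) - (if w = v then d u v / n else 0) := by
      intro w
      by_cases h : w = u
      · subst h; simp [walkW, huv]
      · by_cases h2 : w = v
        · subst h2; simp [walkW, h]
        · simp [walkW, h, h2]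
    simp only [h1, Finset.sum_sub_distrib, Finset.sum_const, Finset.sum_ite_eq',
      Finset.mem_univ, if_true, Finset.card_univ, Fintype.card_fin, nsmul_eq_mul]
    simp only [walkW, if_neg huv]
    field_simp
    ring

private lemma sum_pair_ite {n : ℕ} (g : Fin n → Fin n → ℝ) (u v : Fin n) :
    (∑ p : Fin n × Fin n, if p.1 = u ∧ p.2 = v then g p.1 p.2 else 0) = g u v := by
  rw [Fintype.sum_prod_type]
  simp [Finset.sum_ite_eq', ite_and]

private lemma sum_triple_ite13 {n : ℕ} (g : Fin n → Fin n → Fin n → ℝ) (u v : Fin n) :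
    (∑ q : Fin n × Fin n × Fin n, if q.1 = u ∧ q.2.2 = v then g q.1 q.2.1 q.2.2 else 0)
      = ∑ w, g u w v := by
  rw [Fintype.sum_prod_type]
  simp [Fintype.sum_prod_type, Finset.sum_ite_eq', ite_and, Finset.sum_comm]

private lemma sum_triple_ite12 {n : ℕ} (g : Fin n → Fin n → Fin n → ℝ) (u v : Fin n) :
    (∑ q : Fin n × Fin n × Fin n, if q.1 = u ∧ q.2.1 = v then g q.1 q.2.1 q.2.2 else 0)
      = ∑ w, g u v w := by
  rw [Fintype.sum_prod_type]
  simp [Fintype.sum_prod_type, Finset.sum_ite_eq', ite_and]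

private lemma sum_triple_ite23 {n : ℕ} (g : Fin n → Fin n → Fin n → ℝ) (u v : Fin n) :
    (∑ q : Fin n × Fin n × Fin n, if q.2.1 = u ∧ q.2.2 = v then g q.1 q.2.1 q.2.2 else 0)
      = ∑ w, g w u v := by
  rw [Fintype.sum_prod_type]
  simp [Fintype.sum_prod_type, Finset.sum_ite_eq', ite_and]

/-- For every positive `n`, every doubly stochastic `n × n` matrix `M`, and
every `0 ≤ κ ≤ n/(2n−1)`, `(M, κ)` is a yes-instance of DEMAND-AWARE THROUGHPUT. -/
theorem demand_aware_throughput_oblivious_bound (n : ℕ) (hn : 0 < n)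
    (M : Matrix (Fin n) (Fin n) ℝ) (hM : DoublyStochastic M) (κ : ℝ)
    (h0 : 0 ≤ κ) (h1 : κ ≤ (n : ℝ) / (2 * (n : ℝ) - 1)) :
    DATYes M κ := by
  classical
  obtain ⟨hM0, hMr, hMc⟩ := hM
  have hn1 : (1:ℝ) ≤ (n:ℝ) := by exact_mod_cast hn
  have hN : (0:ℝ) < (n:ℝ) := by linarith
  have h2pos : (0:ℝ) < 2*(n:ℝ)-1 := by linarith
  set K : ℝ := (2*(n:ℝ)-1) * κ with hKdef
  have hK0 : 0 ≤ K := mul_nonneg h2pos.le h0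
  have hKn : K ≤ n := by
    calc K ≤ (2*(n:ℝ)-1) * ((n:ℝ)/(2*(n:ℝ)-1)) :=
          mul_le_mul_of_nonneg_left h1 h2pos.le
      _ = n := by field_simp
  have hM1 : ∀ i j, M i j ≤ 1 := by
    intro i j
    calc M i j ≤ ∑ j', M i j' :=
          Finset.single_le_sum (fun k _ => hM0 i k) (Finset.mem_univ j)
      _ = 1 := hMr i
  set d : Fin n → Fin n → ℝ := fun u v => K * M u v with hddef
  have hd0 : ∀ u v, 0 ≤ d u v := fun u v => mul_nonneg hK0 (hM0 u v)
  have hdK : ∀ u v, d u v ≤ K := fun u v => by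
    calc d u v ≤ K * 1 := mul_le_mul_of_nonneg_left (hM1 u v) hK0
      _ = K := mul_one K
  have hdr : ∀ u, ∑ v, d u v = K := by
    intro u; simp only [hddef, ← Finset.mul_sum, hMr u, mul_one]
  have hdc : ∀ v, ∑ u, d u v = K := by
    intro v; simp only [hddef, ← Finset.mul_sum, hMc v, mul_one]
  refine ⟨fun i j => if i = j then 1 else 2, ⟨?_, ?_⟩, ?_⟩
  · intro i
    rw [← Finset.sum_erase_add _ _ (Finset.mem_univ i)]
    rw [Finset.sum_congr rfl (fun j hj => if_neg (fun h => (Finset.mem_erase.mp hj).1 h.symm))]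
    simp only [Finset.sum_const, smul_eq_mul, Finset.card_erase_of_mem (Finset.mem_univ i),
      Finset.card_univ, Fintype.card_fin, if_pos rfl, if_true]
    omega
  · intro j
    rw [← Finset.sum_erase_add _ _ (Finset.mem_univ j)]
    rw [Finset.sum_congr rfl (fun i hi => if_neg (Finset.mem_erase.mp hi).1)]
    simp only [Finset.sum_const, smul_eq_mul, Finset.card_erase_of_mem (Finset.mem_univ j),
      Finset.card_univ, Fintype.card_fin, if_pos rfl, if_true]
    omega
  set S2 : Finset (List (Fin n)) :=
    (Finset.univ : Finset (Fin n × Fin n)).image (fun p => [p.1, p.2]) with hS2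
  set S3 : Finset (List (Fin n)) :=
    (Finset.univ : Finset (Fin n × Fin n × Fin n)).image (fun p => [p.1, p.2.1, p.2.2]) with hS3
  have hdisj : Disjoint S2 S3 := by
    rw [Finset.disjoint_left]
    intro P h2 h3
    obtain ⟨p, _, rfl⟩ := Finset.mem_image.mp h2
    obtain ⟨q, _, hq⟩ := Finset.mem_image.mp h3
    simp at hq
  have hsum : ∀ g : List (Fin n) → ℝ, ∑ P ∈ S2 ∪ S3, g P =
      (∑ p : Fin n × Fin n, g [p.1, p.2]) +
      (∑ q : Fin n × Fin n × Fin n, g [q.1, q.2.1, q.2.2]) := by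
    intro g
    rw [Finset.sum_union hdisj, hS2, hS3, Finset.sum_image, Finset.sum_image]
    · intro a _ b _ h; simpa [Prod.ext_iff] using h
    · intro a _ b _ h; simpa [Prod.ext_iff] using h
  refine ⟨S2 ∪ S3, walkW d, ?_, ?_, ?_, ?_⟩
  · intro P hP
    rcases Finset.mem_union.mp hP with h | h <;>
      · obtain ⟨p, _, rfl⟩ := Finset.mem_image.mp h; simp
  · intro P _; exact walkW_nonneg d hd0 P
  · intro u v
    rw [hsum]
    have e2 : ∀ p : Fin n × Fin n,
        (if [p.1, p.2].head? = some u ∧ [p.1, p.2].getLast? = some v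
          then walkW d [p.1, p.2] else 0)
        = (if p.1 = u ∧ p.2 = v then walkW d [p.1, p.2] else 0) := by
      intro p; exact if_congr (by simp) rfl rfl
    have e3 : ∀ q : Fin n × Fin n × Fin n,
        (if [q.1, q.2.1, q.2.2].head? = some u ∧ [q.1, q.2.1, q.2.2].getLast? = some v
          then walkW d [q.1, q.2.1, q.2.2] else 0)
        = (if q.1 = u ∧ q.2.2 = v then walkW d [q.1, q.2.1, q.2.2] else 0) := by
      intro q; exact if_congr (by simp) rfl rfl
    rw [Finset.sum_congr rfl (fun p _ => e2 p), Finset.sum_congr rfl (fun q _ => e3 q),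
      sum_pair_ite (fun a b => walkW d [a, b]) u v,
      sum_triple_ite13 (fun a w b => walkW d [a, w, b]) u v,
      walkW_total hn d u v]
    simp only [hddef, hKdef, Matrix.smul_apply, smul_eq_mul]
    ring
  · intro u v
    rw [hsum]
    have ac2 : ∀ x y : Fin n, ((arcCount [x, y] u v : ℕ) : ℝ) =
        if x = u ∧ y = v then 1 else 0 := by
      intro x y
      rw [show arcCount [x, y] u v = if x = u ∧ y = v then 1 else 0 by
        simp [arcCount, List.count_cons, Prod.ext_iff]]
      split_ifs <;> simp
    have ac3 : ∀ x w y : Fin n, ((arcCount [x, w, y] u v : ℕ) : ℝ) =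
        (if x = u ∧ w = v then 1 else 0) + (if w = u ∧ y = v then 1 else 0) := by
      intro x w y
      rw [show arcCount [x, w, y] u v
          = (if x = u ∧ w = v then 1 else 0) + (if w = u ∧ y = v then 1 else 0) by
        simp [arcCount, List.count_cons, Prod.ext_iff]; exact add_comm _ _]
      push_cast
      split_ifs <;> simp
    have e2 : (∑ p : Fin n × Fin n, walkW d [p.1, p.2] * ((arcCount [p.1, p.2] u v : ℕ) : ℝ))
        = walkW d [u, v] := by
      rw [Finset.sum_congr rfl (fun p _ => by rw [ac2 p.1 p.2, mul_ite, mul_one, mul_zero])]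
      exact sum_pair_ite (fun a b => walkW d [a, b]) u v
    have e3 : (∑ q : Fin n × Fin n × Fin n,
          walkW d [q.1, q.2.1, q.2.2] * ((arcCount [q.1, q.2.1, q.2.2] u v : ℕ) : ℝ))
        = (∑ w, walkW d [u, v, w]) + (∑ w, walkW d [w, u, v]) := by
      rw [Finset.sum_congr rfl (fun q _ => by
        rw [ac3 q.1 q.2.1 q.2.2, mul_add, mul_ite, mul_one, mul_zero,
          mul_ite, mul_one, mul_zero])]
      rw [Finset.sum_add_distrib,
        sum_triple_ite12 (fun a w b => walkW d [a, w, b]) u v,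
        sum_triple_ite23 (fun a w b => walkW d [a, w, b]) u v]
    rw [e2, e3]
    by_cases huv : u = v
    · subst huv
      have z1 : ∀ w : Fin n, walkW d [u, u, w] = 0 := by intro w; simp [walkW]
      have z2 : ∀ w : Fin n, walkW d [w, u, u] = 0 := by intro w; simp [walkW]
      simp only [z1, z2, Finset.sum_const_zero, add_zero]
      simp only [walkW, if_true, Nat.cast_one]
      rw [div_le_one hN]
      linarith [hdK u u]
    · have z1 : ∀ w : Fin n, walkW d [u, v, w]
          = d u w / n - (if w = v then d u w / n else 0) := by
        intro w
        by_cases h : w = v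
        · subst h; simp [walkW, Ne.symm huv]
        · simp [walkW, h, Ne.symm h, Ne.symm huv]
      have z2 : ∀ w : Fin n, walkW d [w, u, v]
          = d w v / n - (if w = u then d w v / n else 0) := by
        intro w
        by_cases h : w = u
        · subst h; simp [walkW]
        · simp [walkW, h, Ne.symm h, huv]
      simp only [z1, z2, Finset.sum_sub_distrib, Finset.sum_ite_eq', Finset.mem_univ, if_true,
        ← Finset.sum_div, hdr u, hdc v]
      simp only [walkW, if_neg huv]
      have h2Kn : 2 * K / n ≤ 2 := by
        rw [div_le_iff₀ hN]; nlinarith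
      have heq : 2 * d u v / n + (K / n - d u v / n + (K / n - d u v / n)) = 2 * K / n := by ring
      push_cast
      linarith [heq, h2Kn]
end

section
/- Let M_1 be the doubly stochastic 2×2 matrix [[1/2,1/2],[1/2,1/2]]. For every 2×2 matrix B of nonnegative integers with all row and column sums equal to 3 and every 2×2 matrix C with 0 ≤ C_{u,v} ≤ (M_1)_{u,v} and 3·C_{u,v} ≤ B_{u,v} for all u,v, it holds that Σ_{u,v} C_{u,v} ≤ 5/3; moreover this bound is attained with B = [[1,2],[2,1]] and C = [[1/3,1/2],[1/2,1/3]]. Hence the largest κ for which (M_1,κ) is a yes-instance of DEMAND-AWARE WEAK DIRECT THROUGHPUT equals 5/6. -/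
open Finset

lemma row_bound (b0 b1 : ℕ) (c0 c1 : ℝ) (hb : b0 + b1 = 3)
    (h0 : c0 ≤ 2⁻¹) (h1 : c1 ≤ 2⁻¹)
    (g0 : 3 * c0 ≤ (b0 : ℝ)) (g1 : 3 * c1 ≤ (b1 : ℝ)) :
    c0 + c1 ≤ 5/6 := by
  rcases (by omega : b0 ≤ 1 ∨ b1 ≤ 1) with h | h
  · have : (b0 : ℝ) ≤ 1 := by exact_mod_cast h
    linarith
  · have : (b1 : ℝ) ≤ 1 := by exact_mod_cast h
    linarith

/-- for `M₁ = [[1/2,1/2],[1/2,1/2]]`, any adjacency matrix `B` and hosted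
submatrix `C` satisfy `Σ C ≤ 5/3`; the bound is attained by `B = [[1,2],[2,1]]` and
`C = [[1/3,1/2],[1/2,1/3]]`; hence the largest weak-direct-throughput `κ` for `M₁` is `5/6`. -/
theorem example_M1_weak_direct_throughput :
    let M₁ : Matrix (Fin 2) (Fin 2) ℝ := !![1/2, 1/2; 1/2, 1/2]
    let B₀ : Matrix (Fin 2) (Fin 2) ℕ := !![1, 2; 2, 1]
    let C₀ : Matrix (Fin 2) (Fin 2) ℝ := !![1/3, 1/2; 1/2, 1/3]
    (∀ (B : Matrix (Fin 2) (Fin 2) ℕ) (C : Matrix (Fin 2) (Fin 2) ℝ),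
        IsAdjMatrix B →
        (∀ u v, 0 ≤ C u v ∧ C u v ≤ M₁ u v) →
        (∀ u v, 3 * C u v ≤ (B u v : ℝ)) →
        (∑ u, ∑ v, C u v) ≤ 5 / 3) ∧
    (IsAdjMatrix B₀ ∧ (∀ u v, 0 ≤ C₀ u v ∧ C₀ u v ≤ M₁ u v) ∧
      (∀ u v, 3 * C₀ u v ≤ (B₀ u v : ℝ)) ∧ (∑ u, ∑ v, C₀ u v) = 5 / 3) ∧
    IsGreatest {κ : ℝ | DAWDTYes M₁ κ} (5 / 6) := by
  intro M₁ B₀ C₀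
  have key : ∀ (B : Matrix (Fin 2) (Fin 2) ℕ) (C : Matrix (Fin 2) (Fin 2) ℝ),
      IsAdjMatrix B →
      (∀ u v, 0 ≤ C u v ∧ C u v ≤ M₁ u v) →
      (∀ u v, 3 * C u v ≤ (B u v : ℝ)) →
      (∑ u, ∑ v, C u v) ≤ 5 / 3 := by
    intro B C hB hC hBC
    have r0 := hB.1 0
    have r1 := hB.1 1
    simp [Fin.sum_univ_two] at r0 r1
    have h00 := (hC 0 0).2
    have h01 := (hC 0 1).2
    have h10 := (hC 1 0).2
    have h11 := (hC 1 1).2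
    simp [M₁] at h00 h01 h10 h11
    have b0 := row_bound (B 0 0) (B 0 1) (C 0 0) (C 0 1) r0 h00 h01 (hBC 0 0) (hBC 0 1)
    have b1 := row_bound (B 1 0) (B 1 1) (C 1 0) (C 1 1) r1 h10 h11 (hBC 1 0) (hBC 1 1)
    simp [Fin.sum_univ_two]
    linarith
  refine ⟨key, ⟨⟨?_, ?_⟩, ?_, ?_, ?_⟩, ?_, ?_⟩
  · intro i; fin_cases i <;> simp [Fin.sum_univ_two, B₀]
  · intro j; fin_cases j <;> simp [Fin.sum_univ_two, B₀]
  · intro u v; fin_cases u <;> fin_cases v <;> norm_num [C₀, M₁]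
  · intro u v; fin_cases u <;> fin_cases v <;> norm_num [C₀, B₀]
  · norm_num [Fin.sum_univ_two, C₀]
  · -- membership
    refine ⟨B₀, C₀, ⟨?_, ?_⟩, ?_, ?_, ?_⟩
    · intro i; fin_cases i <;> simp [Fin.sum_univ_two, B₀]
    · intro j; fin_cases j <;> simp [Fin.sum_univ_two, B₀]
    · intro u v; fin_cases u <;> fin_cases v <;> norm_num [C₀, M₁]
    · norm_num [Fin.sum_univ_two, C₀]
    · intro u v; fin_cases u <;> fin_cases v <;> norm_num [C₀, B₀]
  · intro κ hκ
    obtain ⟨B, C, hB, hC, hsum, hBC⟩ := hκ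
    have hBC' : ∀ u v, 3 * C u v ≤ (B u v : ℝ) := by
      intro u v; have := hBC u v; norm_num at this; linarith
    have := key B C hB hC hBC'
    have : κ * 2 ≤ 5/3 := by
      calc κ * 2 = κ * (2:ℕ) := by norm_num
      _ ≤ ∑ u, ∑ v, C u v := hsum
      _ ≤ 5/3 := this
    linarith
end

section
/- Let M_2 be the doubly stochastic 2×2 matrix [[9/10,1/10],[1/10,9/10]]. For every real κ > 100/114, the pair (M_2,κ) is a no-instance of DEMAND-AWARE THROUGHPUT; that is, no 2×2 matrix B of nonnegative integers with all row and column sums equal to 3 can host κ·M_2. -/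
open Finset

lemma count_sum_fin2 (l : List (Fin 2 × Fin 2)) :
    l.count (0,0) + l.count (0,1) + l.count (1,0) + l.count (1,1) = l.length := by
  induction l with
  | nil => simp
  | cons p l ih =>
    have hp : p = (0,0) ∨ p = (0,1) ∨ p = (1,0) ∨ p = (1,1) := by revert p; decide
    rcases hp with rfl|rfl|rfl|rfl <;>
      simp (config := { decide := true }) only [List.count_cons, List.length_cons,
        if_true, if_false] <;> omega

lemma cross_fin2 : ∀ (P : List (Fin 2)), P.head? = some 0 → P.getLast? = some 1 →
    1 ≤ arcCount P 0 1 := by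
  intro P
  induction P with
  | nil => intro h; simp at h
  | cons a l ih =>
    intro h0 h1
    simp at h0
    subst h0
    cases l with
    | nil => simp at h1
    | cons b l' =>
      have hb : ∀ c : Fin 2, c = 0 ∨ c = 1 := by decide
      rcases hb b with rfl | rfl
      · have := ih (by simp) (by simpa [List.getLast?_cons_cons] using h1)
        unfold arcCount at this ⊢
        simp (config := { decide := true }) only [List.zip_cons_cons, List.tail_cons,
          List.count_cons, if_true, if_false] at this ⊢
        omega
      · unfold arcCount
        simp (config := { decide := true }) only [List.zip_cons_cons, List.tail_cons,
          List.count_cons, if_true, if_false]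
        omega

lemma weight_ge_one (P : List (Fin 2)) (hP : 2 ≤ P.length) :
    1 ≤ 2 * arcCount P 0 0 + arcCount P 0 1 + arcCount P 1 0 + 2 * arcCount P 1 1 := by
  have h := count_sum_fin2 (P.zip P.tail)
  have hz : 1 ≤ (P.zip P.tail).length := by
    rw [List.length_zip, List.length_tail]; omega
  unfold arcCount; omega

lemma weight_ge_two (P : List (Fin 2)) (hP : 2 ≤ P.length) (u : Fin 2)
    (hu : P.head? = some u) (hv : P.getLast? = some u) :
    2 ≤ 2 * arcCount P 0 0 + arcCount P 0 1 + arcCount P 1 0 + 2 * arcCount P 1 1 := by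
  rcases Nat.lt_or_ge P.length 3 with h3 | h3
  · have h2 : P.length = 2 := by omega
    obtain ⟨a, b, rfl⟩ := List.length_eq_two.mp h2
    simp at hu hv
    have hba : b = a := by rw [hu, hv]
    subst hba
    have hc : ∀ c : Fin 2, c = 0 ∨ c = 1 := by decide
    rcases hc b with rfl | rfl <;>
      · unfold arcCount
        simp (config := { decide := true }) only [List.zip_cons_cons, List.tail_cons,
          List.count_cons, List.zip_nil_right, List.count_nil, if_true, if_false]
  · have h := count_sum_fin2 (P.zip P.tail)
    have hz : 2 ≤ (P.zip P.tail).length := by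
      rw [List.length_zip, List.length_tail]; omega
    unfold arcCount; omega

/-- for `M₂ = [[9/10,1/10],[1/10,9/10]]` and every `κ > 100/114`,
`(M₂, κ)` is a no-instance of DEMAND-AWARE THROUGHPUT. -/
theorem example_M2_no_instance (κ : ℝ) (hκ : 100 / 114 < κ) :
    ¬ DATYes (!![9/10, 1/10; 1/10, 9/10] : Matrix (Fin 2) (Fin 2) ℝ) κ := by
  rintro ⟨B, ⟨hrow, hcol⟩, S, f, hlen, hf, hflow, hcap⟩
  have hκ0 : (0:ℝ) < κ := by linarith
  have r0 := hrow 0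
  have r1 := hrow 1
  have c0 := hcol 0
  norm_num [Fin.sum_univ_two] at r0 r1 c0
  have F00 : (∑ P ∈ S, if P.head? = some 0 ∧ P.getLast? = some (0:Fin 2) then f P else 0)
      = 3 * (κ * (9/10)) := by
    rw [hflow 0 0]
    norm_num [Matrix.smul_apply, Matrix.cons_val_zero, Matrix.cons_val_one,
      Matrix.head_cons, smul_eq_mul]
  have F01 : (∑ P ∈ S, if P.head? = some 0 ∧ P.getLast? = some (1:Fin 2) then f P else 0)
      = 3 * (κ * (1/10)) := by
    rw [hflow 0 1]
    norm_num [Matrix.smul_apply, Matrix.cons_val_zero, Matrix.cons_val_one,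
      Matrix.head_cons, smul_eq_mul]
  have F10 : (∑ P ∈ S, if P.head? = some 1 ∧ P.getLast? = some (0:Fin 2) then f P else 0)
      = 3 * (κ * (1/10)) := by
    rw [hflow 1 0]
    norm_num [Matrix.smul_apply, Matrix.cons_val_zero, Matrix.cons_val_one,
      Matrix.head_cons, smul_eq_mul]
  have F11 : (∑ P ∈ S, if P.head? = some 1 ∧ P.getLast? = some (1:Fin 2) then f P else 0)
      = 3 * (κ * (9/10)) := by
    rw [hflow 1 1]
    norm_num [Matrix.smul_apply, Matrix.cons_val_zero, Matrix.cons_val_one,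
      Matrix.head_cons, smul_eq_mul]
  rcases Nat.eq_zero_or_pos (B 0 1) with hB01 | hB01
  · -- no cross arcs from 0 to 1, but positive cross demand
    have hc := hcap 0 1
    rw [hB01, Nat.cast_zero] at hc
    have hge : (∑ P ∈ S, if P.head? = some 0 ∧ P.getLast? = some (1:Fin 2) then f P else 0)
        ≤ ∑ P ∈ S, f P * (arcCount P 0 1 : ℝ) := by
      apply Finset.sum_le_sum
      intro P hP
      by_cases h : P.head? = some 0 ∧ P.getLast? = some (1:Fin 2)
      · rw [if_pos h]
        have h1 : (1:ℝ) ≤ (arcCount P 0 1 : ℝ) := by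
          exact_mod_cast cross_fin2 P h.1 h.2
        nlinarith [hf P hP]
      · rw [if_neg h]
        exact mul_nonneg (hf P hP) (Nat.cast_nonneg _)
    rw [F01] at hge
    nlinarith
  · -- B 0 1 ≥ 1, weighted counting argument
    have key : ∀ P ∈ S,
        2 * (if P.head? = some 0 ∧ P.getLast? = some (0:Fin 2) then f P else 0)
        + (if P.head? = some 0 ∧ P.getLast? = some (1:Fin 2) then f P else 0)
        + (if P.head? = some 1 ∧ P.getLast? = some (0:Fin 2) then f P else 0)
        + 2 * (if P.head? = some 1 ∧ P.getLast? = some (1:Fin 2) then f P else 0)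
        ≤ f P * (arcCount P 0 0 : ℝ) * 2 + f P * (arcCount P 0 1 : ℝ)
          + f P * (arcCount P 1 0 : ℝ) + f P * (arcCount P 1 1 : ℝ) * 2 := by
      intro P hP
      have hlP := hlen P hP
      have hfP := hf P hP
      have hne : P ≠ [] := by
        intro h; rw [h] at hlP; simp at hlP
      obtain ⟨u, hu⟩ : ∃ u, P.head? = some u := ⟨P.head hne, List.head?_eq_head hne⟩
      obtain ⟨v, hv⟩ : ∃ v, P.getLast? = some v :=
        ⟨P.getLast hne, List.getLast?_eq_getLast hne⟩
      have hw1 : (1:ℝ) ≤ 2 * (arcCount P 0 0 : ℝ) + (arcCount P 0 1 : ℝ)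
          + (arcCount P 1 0 : ℝ) + 2 * (arcCount P 1 1 : ℝ) := by
        exact_mod_cast weight_ge_one P hlP
      have hcse : ∀ c : Fin 2, c = 0 ∨ c = 1 := by decide
      rcases hcse u with rfl | rfl <;> rcases hcse v with rfl | rfl
      · have hw2 : (2:ℝ) ≤ 2 * (arcCount P 0 0 : ℝ) + (arcCount P 0 1 : ℝ)
            + (arcCount P 1 0 : ℝ) + 2 * (arcCount P 1 1 : ℝ) := by
          exact_mod_cast weight_ge_two P hlP 0 hu hv
        simp (config := { decide := true }) only [hu, hv, Option.some.injEq,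
          and_true, and_false, true_and, false_and, if_true, if_false]
        nlinarith
      · simp (config := { decide := true }) only [hu, hv, Option.some.injEq,
          and_true, and_false, true_and, false_and, if_true, if_false]
        nlinarith
      · simp (config := { decide := true }) only [hu, hv, Option.some.injEq,
          and_true, and_false, true_and, false_and, if_true, if_false]
        nlinarith
      · have hw2 : (2:ℝ) ≤ 2 * (arcCount P 0 0 : ℝ) + (arcCount P 0 1 : ℝ)
            + (arcCount P 1 0 : ℝ) + 2 * (arcCount P 1 1 : ℝ) := by
          exact_mod_cast weight_ge_two P hlP 1 hu hv
        simp (config := { decide := true }) only [hu, hv, Option.some.injEq,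
          and_true, and_false, true_and, false_and, if_true, if_false]
        nlinarith
    have hsum := Finset.sum_le_sum key
    rw [Finset.sum_add_distrib, Finset.sum_add_distrib, Finset.sum_add_distrib,
      Finset.sum_add_distrib, Finset.sum_add_distrib, Finset.sum_add_distrib,
      ← Finset.mul_sum, ← Finset.mul_sum, ← Finset.sum_mul, ← Finset.sum_mul] at hsum
    rw [F00, F01, F10, F11] at hsum
    have t00 := hcap 0 0
    have t01 := hcap 0 1
    have t10 := hcap 1 0
    have t11 := hcap 1 1
    have hb : (B 0 0 : ℝ) + (B 0 1 : ℝ) = 3 := by exact_mod_cast r0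
    have hb' : (B 1 0 : ℝ) + (B 1 1 : ℝ) = 3 := by exact_mod_cast r1
    have hb00 : (B 0 0 : ℝ) ≤ 2 := by
      have : B 0 0 ≤ 2 := by omega
      exact_mod_cast this
    have hb11 : (B 1 1 : ℝ) ≤ 2 := by
      have : B 1 1 ≤ 2 := by omega
      exact_mod_cast this
    nlinarith
end
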